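/- arXiv:2202.08800 — 8 statements merged into one kernel-verified Lean document; each statement's English description precedes it below -/
import Mathlib

section
/- Let G be a connected graph on n vertices with diameter at most 2. If μ is a nonzero Laplacian eigenvalue of G with eigenvector x orthogonal to the all-ones vector, then x is an eigenvector of the distance Laplacian D^L(G) with eigenvalue 2n - μ. -/
open Matrix

/-- The transmission of a vertex: sum of distances to all other vertices. -/
noncomputable def transmission {V : Type*} [Fintype V] (G : SimpleGraph V) (v : V) : ℕ :=
  ∑ u, G.dist v u

/-- The distance Laplacian matrix `D^L(G) = Diag(Tr) - D(G)`. -/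
noncomputable def distLapMatrix {V : Type*} [Fintype V] [DecidableEq V]
    (G : SimpleGraph V) : Matrix V V ℝ :=
  fun u v => if u = v then (transmission G u : ℝ) else -(G.dist u v : ℝ)

/-- `μ` is an eigenvalue of the real matrix `M`. -/
def IsEigenvalue {V : Type*} [Fintype V] [DecidableEq V] (M : Matrix V V ℝ) (μ : ℝ) : Prop :=
  Module.End.HasEigenvalue (Matrix.toLin' M) μ

/-- The multiplicity of `μ` as an eigenvalue of `M` (dimension of the eigenspace). -/
noncomputable def eigMult {V : Type*} [Fintype V] [DecidableEq V]
    (M : Matrix V V ℝ) (μ : ℝ) : ℕ :=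
  Module.finrank ℝ (Module.End.eigenspace (Matrix.toLin' M) μ)

lemma dist_cast_eq {V : Type*} [Fintype V] [DecidableEq V] (G : SimpleGraph V)
    [DecidableRel G.Adj] (hG : G.Connected) (hdiam : ∀ u v : V, G.dist u v ≤ 2)
    (v u : V) :
    (G.dist v u : ℝ) = 2 - (if v = u then 2 else 0) - (if G.Adj v u then 1 else 0) := by
  by_cases h : v = u
  · subst h; simp [SimpleGraph.dist_self]
  · by_cases ha : G.Adj v u
    · have : G.dist v u = 1 := SimpleGraph.dist_eq_one_iff_adj.mpr ha
      simp [h, ha, this]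
      norm_num
    · have h1 : G.dist v u ≠ 1 := fun hc => ha (SimpleGraph.dist_eq_one_iff_adj.mp hc)
      have h0 : 0 < G.dist v u := hG.pos_dist_of_ne h
      have h2 : G.dist v u = 2 := by have := hdiam v u; omega
      simp [h, ha, h2]

lemma transmission_cast_eq {V : Type*} [Fintype V] [DecidableEq V] (G : SimpleGraph V)
    [DecidableRel G.Adj] (hG : G.Connected) (hdiam : ∀ u v : V, G.dist u v ≤ 2)
    (v : V) :
    (transmission G v : ℝ) = 2 * (Fintype.card V : ℝ) - 2 - (G.degree v : ℝ) := by
  have h1 : (transmission G v : ℝ) = ∑ u, (G.dist v u : ℝ) := by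
    rw [transmission]; push_cast; rfl
  rw [h1]
  have h2 : ∀ u : V, (G.dist v u : ℝ)
      = 2 - (if v = u then 2 else 0) - (if G.Adj v u then 1 else 0) :=
    dist_cast_eq G hG hdiam v
  simp_rw [h2]
  rw [Finset.sum_sub_distrib, Finset.sum_sub_distrib, Finset.sum_const,
    Finset.sum_ite_eq (Finset.univ) v (fun _ => (2:ℝ)), if_pos (Finset.mem_univ v)]
  have h3 : ∑ u : V, (if G.Adj v u then (1:ℝ) else 0) = (G.degree v : ℝ) := by
    rw [Finset.sum_boole, SimpleGraph.degree, SimpleGraph.neighborFinset_eq_filter]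
  rw [h3]
  simp [mul_comm]

/-- If `G` is connected of diameter at most 2 on `n` vertices and `x` is an eigenvector
of the Laplacian for a nonzero eigenvalue `μ`, orthogonal to the all-ones vector, then
`x` is an eigenvector of the distance Laplacian with eigenvalue `2n - μ`. -/
theorem stmt_3 {V : Type*} [Fintype V] [DecidableEq V] (G : SimpleGraph V)
    [DecidableRel G.Adj] (hG : G.Connected) (hdiam : ∀ u v : V, G.dist u v ≤ 2)
    (μ : ℝ) (hμ : μ ≠ 0) (x : V → ℝ) (hx : x ≠ 0)
    (hev : (G.lapMatrix ℝ).mulVec x = μ • x) (horth : ∑ v, x v = 0) :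
    (distLapMatrix G).mulVec x = (2 * (Fintype.card V : ℝ) - μ) • x := by
  funext v
  have hL : G.degree v * x v - ∑ u ∈ G.neighborFinset v, x u = μ * x v := by
    have := congrFun hev v
    rwa [SimpleGraph.lapMatrix_mulVec_apply] at this
  have hS : ∑ u ∈ G.neighborFinset v, x u = G.degree v * x v - μ * x v := by linarith
  have hentry : ∀ u : V, distLapMatrix G v u
      = (if v = u then (transmission G v : ℝ) else 0) - (G.dist v u : ℝ) := by
    intro u
    by_cases h : v = u
    · subst h; simp [distLapMatrix, SimpleGraph.dist_self]
    · simp [distLapMatrix, h]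
  have key : (distLapMatrix G).mulVec x v
      = (transmission G v : ℝ) * x v - ∑ u, (G.dist v u : ℝ) * x u := by
    rw [mulVec, dotProduct]
    simp_rw [hentry, sub_mul, Finset.sum_sub_distrib]
    congr 1
    simp [ite_mul, Finset.sum_ite_eq]
  have hdsum : ∑ u, (G.dist v u : ℝ) * x u
      = -2 * x v - (G.degree v * x v - μ * x v) := by
    have h2 : ∀ u : V, (G.dist v u : ℝ) * x u
        = 2 * x u - (if v = u then 2 * x u else 0) - (if G.Adj v u then x u else 0) := by
      intro u
      rw [dist_cast_eq G hG hdiam v u]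
      by_cases h : v = u <;> by_cases ha : G.Adj v u <;> simp [h, ha] <;> ring
    simp_rw [h2]
    rw [Finset.sum_sub_distrib, Finset.sum_sub_distrib, ← Finset.mul_sum, horth,
      Finset.sum_ite_eq (Finset.univ) v (fun u => 2 * x u), if_pos (Finset.mem_univ v)]
    have h3 : ∑ u : V, (if G.Adj v u then x u else 0) = ∑ u ∈ G.neighborFinset v, x u := by
      rw [SimpleGraph.neighborFinset_eq_filter, Finset.sum_filter]
    rw [h3, hS]
    ring
  rw [key, hdsum, transmission_cast_eq G hG hdiam v]
  simp only [Pi.smul_apply, smul_eq_mul]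
  ring
end

section
/- Let G be a graph on n vertices and let K = {v_1, ..., v_p} be a clique of G such that all vertices of K have the same neighborhoods outside K (N(v_i) \ K = N(v_j) \ K for all i, j). Then all v_i have the same transmission ∂ = Tr(v_i), and ∂ + 1 is an eigenvalue of the distance Laplacian D^L(G) with multiplicity at least p - 1. -/
open Matrix

section Aux

variable {V : Type*} [Fintype V] [DecidableEq V]

lemma dist_le_aux (G : SimpleGraph V) (hG : G.Connected) (K : Finset V)
    (hK : G.IsClique (K : Set V))
    (hN : ∀ v ∈ K, ∀ w ∈ K, G.neighborSet v \ (K : Set V) = G.neighborSet w \ (K : Set V))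
    {v w u : V} (hv : v ∈ K) (hw : w ∈ K) (hu1 : u ≠ v) (hu2 : u ≠ w) :
    G.dist u w ≤ G.dist u v := by
  have hdvu : G.dist v u ≠ 0 := by
    have := hG.pos_dist_of_ne hu1
    rw [SimpleGraph.dist_comm] at this
    omega
  obtain ⟨p, hp⟩ := SimpleGraph.exists_walk_of_dist_ne_zero hdvu
  cases p with
  | nil => exact absurd rfl hu1.symm
  | @cons _ z _ h q =>
    have hq : q.length + 1 = G.dist v u := by simpa using hp
    have huz : G.dist u z ≤ q.length := by
      have := SimpleGraph.dist_le q.reverse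
      simpa [SimpleGraph.dist_comm] using this
    by_cases hz : z = w
    · subst hz
      have h2 : G.dist u v = G.dist v u := SimpleGraph.dist_comm ..
      omega
    · have hadj : G.Adj z w := by
        by_cases hzK : z ∈ K
        · exact hK hzK hw hz
        · have : z ∈ G.neighborSet v \ (K : Set V) := ⟨h, hzK⟩
          rw [hN v hv w hw] at this
          exact this.1.symm
      calc G.dist u w ≤ G.dist u z + G.dist z w := hG.dist_triangle
        _ ≤ q.length + 1 := by
            have : G.dist z w ≤ 1 := by
              simpa using SimpleGraph.dist_le hadj.toWalk
            omega
        _ = G.dist v u := hq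
        _ = G.dist u v := SimpleGraph.dist_comm ..

lemma dist_eq_aux (G : SimpleGraph V) (hG : G.Connected) (K : Finset V)
    (hK : G.IsClique (K : Set V))
    (hN : ∀ v ∈ K, ∀ w ∈ K, G.neighborSet v \ (K : Set V) = G.neighborSet w \ (K : Set V))
    {v w u : V} (hv : v ∈ K) (hw : w ∈ K) (hu1 : u ≠ v) (hu2 : u ≠ w) :
    G.dist u v = G.dist u w :=
  le_antisymm (dist_le_aux G hG K hK hN hw hv hu2 hu1)
    (dist_le_aux G hG K hK hN hv hw hu1 hu2)

lemma trans_eq_aux (G : SimpleGraph V) (hG : G.Connected) (K : Finset V)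
    (hK : G.IsClique (K : Set V))
    (hN : ∀ v ∈ K, ∀ w ∈ K, G.neighborSet v \ (K : Set V) = G.neighborSet w \ (K : Set V))
    {v w : V} (hv : v ∈ K) (hw : w ∈ K) :
    transmission G v = transmission G w := by
  unfold transmission
  rw [Fintype.sum_equiv (Equiv.swap v w) _ (fun u => G.dist w u)]
  intro u
  by_cases h1 : u = v
  · subst h1; simp [SimpleGraph.dist_self]
  by_cases h2 : u = w
  · subst h2; simp [SimpleGraph.dist_comm]
  · rw [Equiv.swap_apply_of_ne_of_ne h1 h2, SimpleGraph.dist_comm,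
      dist_eq_aux G hG K hK hN hv hw h1 h2, SimpleGraph.dist_comm]

lemma eigvec_aux (G : SimpleGraph V) (hG : G.Connected) (K : Finset V)
    (hK : G.IsClique (K : Set V))
    (hN : ∀ v ∈ K, ∀ w ∈ K, G.neighborSet v \ (K : Set V) = G.neighborSet w \ (K : Set V))
    {v w : V} (hv : v ∈ K) (hw : w ∈ K) (hvw : v ≠ w) :
    (distLapMatrix G).mulVec (Pi.single w 1 - Pi.single v 1)
      = ((transmission G v : ℝ) + 1) • (Pi.single w 1 - Pi.single v 1) := by
  have hadj : G.Adj v w := hK hv hw hvw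
  have hd1 : G.dist v w = 1 := SimpleGraph.dist_eq_one_iff_adj.mpr hadj
  have hd1' : G.dist w v = 1 := by rw [SimpleGraph.dist_comm]; exact hd1
  have htr : transmission G w = transmission G v := trans_eq_aux G hG K hK hN hw hv
  funext u
  have hrow : (distLapMatrix G).mulVec (Pi.single w 1 - Pi.single v 1) u
      = distLapMatrix G u w - distLapMatrix G u v := by
    simp [Matrix.mulVec, dotProduct, mul_sub, Finset.sum_sub_distrib,
      Pi.single_apply, mul_ite]
  rw [hrow]
  by_cases h1 : u = w
  · subst h1
    simp [distLapMatrix, (Ne.symm hvw), hd1', htr, Pi.single_apply, hvw]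
  by_cases h2 : u = v
  · subst h2
    simp [distLapMatrix, hvw, hd1, Pi.single_apply, Ne.symm hvw]
    try ring
  · have := dist_eq_aux G hG K hK hN hv hw h2 h1
    simp [distLapMatrix, h1, h2, this, Pi.single_apply]

end Aux

/-- If `K` is a clique of a connected graph `G` such that all vertices of `K` have the same
neighborhoods outside `K`, then all vertices of `K` have the same transmission `∂` and
`∂ + 1` is a distance Laplacian eigenvalue of multiplicity at least `|K| - 1`. -/
theorem stmt_4 {V : Type*} [Fintype V] [DecidableEq V] (G : SimpleGraph V)
    (hG : G.Connected) (K : Finset V) (hK : G.IsClique (K : Set V))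
    (hN : ∀ v ∈ K, ∀ w ∈ K, G.neighborSet v \ (K : Set V) = G.neighborSet w \ (K : Set V)) :
    ∃ t : ℕ, (∀ v ∈ K, transmission G v = t) ∧
      K.card - 1 ≤ eigMult (distLapMatrix G) ((t : ℝ) + 1) := by
  rcases K.eq_empty_or_nonempty with hKe | ⟨v0, hv0⟩
  · subst hKe
    exact ⟨0, by simp, by simp⟩
  refine ⟨transmission G v0, fun v hv => trans_eq_aux G hG K hK hN hv hv0, ?_⟩
  set t : ℝ := (transmission G v0 : ℝ)
  set E := Module.End.eigenspace (Matrix.toLin' (distLapMatrix G)) (t + 1) with hE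
  set S := K.erase v0 with hS
  have hmem : ∀ i : ↥S, (Pi.single (i : V) 1 - Pi.single v0 1 : V → ℝ) ∈ E := by
    intro i
    rw [hE, Module.End.mem_eigenspace_iff, Matrix.toLin'_apply]
    exact eigvec_aux G hG K hK hN hv0 (Finset.mem_of_mem_erase i.2)
      (Ne.symm (Finset.ne_of_mem_erase i.2))
  set F : ↥S → ↥E := fun i => ⟨Pi.single (i : V) 1 - Pi.single v0 1, hmem i⟩ with hF
  have hli : LinearIndependent ℝ F := by
    apply LinearIndependent.of_comp E.subtype
    rw [Fintype.linearIndependent_iff]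
    intro g hg i
    have := congrFun hg (i : V)
    have hv0S : v0 ∉ S := Finset.notMem_erase v0 K
    have hiv0 : (i : V) ≠ v0 := Finset.ne_of_mem_erase i.2
    have h2 : (∑ x ∈ S.attach, if ((i : V) = (x : V)) then g x else 0) = 0 := by
      simpa [hF, Finset.sum_apply, Pi.single_apply, hiv0] using this
    simp only [Subtype.coe_inj] at h2
    rwa [Finset.sum_ite_eq S.attach i g, if_pos (Finset.mem_attach S i)] at h2
  have hcard : Fintype.card ↥S = K.card - 1 := by
    rw [Fintype.card_coe, hS, Finset.card_erase_of_mem hv0]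
  calc K.card - 1 = Fintype.card ↥S := hcard.symm
    _ ≤ Module.finrank ℝ ↥E := hli.fintype_card_le_finrank
    _ = eigMult (distLapMatrix G) (t + 1) := rfl
end

section
/- Let G be a connected graph on n vertices and let K = {v_1, ..., v_p} be an independent set of G such that N(v_i) = N(v_j) for all i, j. Then all v_i have the same transmission ∂ = Tr(v_i), and ∂ + 2 is an eigenvalue of the distance Laplacian D^L(G) with multiplicity at least p - 1. -/
open Matrix

/-! Two vertices `v ≠ w` with equal neighbourhoods are nonadjacent, at distance 2, and at equal
distance from every other vertex. Hence the transposition `v ↔ w` preserves distances from them, so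
they have the same transmission `t`, and `e_v - e_w` is an eigenvector of `D^L` for `t + 2`.
Fixing `v₀ ∈ K`, the vectors `e_v - e_{v₀}` for `v ∈ K \ {v₀}` are linearly independent. -/

namespace SimpleGraph

variable {V : Type*} {G : SimpleGraph V} {u v w : V}

lemma not_adj_of_neighborSet_eq (h : G.neighborSet v = G.neighborSet w) : ¬ G.Adj v w := by
  intro hvw
  have hw : w ∈ G.neighborSet w := h ▸ hvw
  exact G.irrefl hw

/-- Replacing the first vertex of a shortest walk from `w` by a twin `v` gives a walk from `v`. -/
lemma dist_le_dist_of_neighborSet_eq (h : G.neighborSet v = G.neighborSet w)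
    (hwu : G.Reachable w u) (hne : w ≠ u) : G.dist v u ≤ G.dist w u := by
  obtain ⟨p, hp⟩ := hwu.exists_walk_length_eq_dist
  obtain ⟨x, hwx, q, rfl⟩ := Walk.exists_eq_cons_of_ne hne p
  have hvx : G.Adj v x := by
    have hx : x ∈ G.neighborSet w := hwx
    rwa [← h] at hx
  calc G.dist v u ≤ (Walk.cons hvx q).length := dist_le _
    _ = G.dist w u := hp

lemma Connected.dist_eq_dist_of_neighborSet_eq (hG : G.Connected)
    (h : G.neighborSet v = G.neighborSet w) (hv : v ≠ u) (hw : w ≠ u) :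
    G.dist v u = G.dist w u :=
  le_antisymm (dist_le_dist_of_neighborSet_eq h (hG w u) hw)
    (dist_le_dist_of_neighborSet_eq h.symm (hG v u) hv)

lemma Reachable.dist_eq_two_of_neighborSet_eq (hr : G.Reachable v w) (hne : v ≠ w)
    (h : G.neighborSet v = G.neighborSet w) : G.dist v w = 2 := by
  obtain ⟨x, hvx, -, -⟩ := Walk.exists_eq_cons_of_ne hne hr.some
  have hxw : G.Adj x w := by
    have hx : x ∈ G.neighborSet v := hvx
    rw [h] at hx
    exact hx.symm
  have hle : G.dist v w ≤ 2 := dist_le (.cons hvx (.cons hxw .nil))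
  have hlt := hr.one_lt_dist_of_ne_of_not_adj hne (not_adj_of_neighborSet_eq h)
  omega

lemma Connected.transmission_eq_of_neighborSet_eq [Fintype V] (hG : G.Connected)
    (h : G.neighborSet v = G.neighborSet w) : transmission G v = transmission G w := by
  classical
  refine Fintype.sum_equiv (Equiv.swap v w) _ _ fun u => ?_
  rcases eq_or_ne u v with rfl | hv
  · simp only [Equiv.swap_apply_left, dist_self]
  rcases eq_or_ne u w with rfl | hw
  · simp only [Equiv.swap_apply_right, dist_comm]
  rw [Equiv.swap_apply_of_ne_of_ne hv hw]
  exact hG.dist_eq_dist_of_neighborSet_eq h (Ne.symm hv) (Ne.symm hw)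

lemma Connected.distLapMatrix_mulVec_single_sub_single [Fintype V] [DecidableEq V]
    (hG : G.Connected) (hne : v ≠ w)
    (h : G.neighborSet v = G.neighborSet w) :
    distLapMatrix G *ᵥ (Pi.single v 1 - Pi.single w 1) =
      ((transmission G v : ℝ) + 2) • (Pi.single v 1 - Pi.single w 1) := by
  have hvw : (G.dist v w : ℝ) = 2 := by
    rw [(hG v w).dist_eq_two_of_neighborSet_eq hne h]; norm_num
  have hwv : (G.dist w v : ℝ) = 2 := by rw [dist_comm, hvw]
  have htr := hG.transmission_eq_of_neighborSet_eq h
  rw [mulVec_sub, mulVec_single_one, mulVec_single_one]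
  funext u
  simp only [Pi.sub_apply, Pi.smul_apply, smul_eq_mul, col_apply, distLapMatrix]
  rcases eq_or_ne u v with rfl | hv
  · simp [hne, hvw]
  rcases eq_or_ne u w with rfl | hw
  · simp [hne.symm, hwv, htr]; ring
  simp [hv, hw, dist_comm, hG.dist_eq_dist_of_neighborSet_eq h (Ne.symm hv) (Ne.symm hw)]

end SimpleGraph

lemma linearIndependent_single_sub_single {ι : Type*} (R : Type*) [Ring R] [DecidableEq ι]
    {p : ι → Prop} {i₀ : ι} (h : ∀ i, p i → i ≠ i₀) :
    LinearIndependent R fun i : {i // p i} => (Pi.single (i : ι) 1 - Pi.single i₀ 1 : ι → R) :=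
  ((affineIndependent_iff_linearIndependent_vsub R (fun i => (Pi.single i 1 : ι → R)) i₀).1
    (Pi.linearIndependent_single_one ι R).affineIndependent).comp (Subtype.impEmbedding _ _ h)
    (Subtype.impEmbedding _ _ h).injective

theorem stmt_5_general {V : Type*} [Fintype V] [DecidableEq V] (G : SimpleGraph V)
    (hG : G.Connected) (K : Finset V)
    (hN : ∀ v ∈ K, ∀ w ∈ K, G.neighborSet v = G.neighborSet w) :
    ∃ t : ℕ, (∀ v ∈ K, transmission G v = t) ∧
      K.card - 1 ≤ eigMult (distLapMatrix G) ((t : ℝ) + 2) := by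
  rcases K.eq_empty_or_nonempty with rfl | ⟨v₀, hv₀⟩
  · simp
  refine ⟨transmission G v₀, fun v hv => hG.transmission_eq_of_neighborSet_eq (hN v hv v₀ hv₀),
    ?_⟩
  let b : K.erase v₀ → V → ℝ := fun v => Pi.single v.1 1 - Pi.single v₀ 1
  have hb : LinearIndependent ℝ b :=
    linearIndependent_single_sub_single ℝ fun _ => Finset.ne_of_mem_erase
  have hspan : Submodule.span ℝ (Set.range b) ≤
      Module.End.eigenspace (toLin' (distLapMatrix G)) ((transmission G v₀ : ℝ) + 2) := by
    refine Submodule.span_le.2 (Set.range_subset_iff.2 fun v => ?_)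
    have hv := Finset.mem_of_mem_erase v.2
    rw [SetLike.mem_coe, Module.End.mem_eigenspace_iff, toLin'_apply,
      ← hG.transmission_eq_of_neighborSet_eq (hN v hv v₀ hv₀)]
    exact hG.distLapMatrix_mulVec_single_sub_single (Finset.ne_of_mem_erase v.2) (hN v hv v₀ hv₀)
  calc K.card - 1 = Fintype.card (K.erase v₀) := by
        rw [Fintype.card_coe, Finset.card_erase_of_mem hv₀]
    _ = Module.finrank ℝ (Submodule.span ℝ (Set.range b)) := (finrank_span_eq_card hb).symm
    _ ≤ _ := Submodule.finrank_mono hspan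

/-- If `K` is an independent set of a connected graph `G` such that all vertices of `K` have
the same neighborhood, then all vertices of `K` have the same transmission `∂` and
`∂ + 2` is a distance Laplacian eigenvalue of multiplicity at least `|K| - 1`. -/
theorem stmt_5 {V : Type*} [Fintype V] [DecidableEq V] (G : SimpleGraph V)
    (hG : G.Connected) (K : Finset V)
    (hind : ∀ v ∈ K, ∀ w ∈ K, ¬ G.Adj v w)
    (hN : ∀ v ∈ K, ∀ w ∈ K, G.neighborSet v = G.neighborSet w) :
    ∃ t : ℕ, (∀ v ∈ K, transmission G v = t) ∧
      K.card - 1 ≤ eigMult (distLapMatrix G) ((t : ℝ) + 2) :=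
  stmt_5_general G hG K hN
end

section
/- Let G be a connected graph on n vertices. Then n is an eigenvalue of the distance Laplacian D^L(G) if and only if the complement graph of G is disconnected. -/
open Matrix

lemma distLap_mulVec {V : Type*} [Fintype V] [DecidableEq V] (G : SimpleGraph V)
    (x : V → ℝ) (u : V) :
    (distLapMatrix G).mulVec x u = ∑ v, (G.dist u v : ℝ) * (x u - x v) := by
  have h : ∀ v : V, (if u = v then (transmission G u : ℝ) else -(G.dist u v : ℝ)) * x v
      = (if u = v then (transmission G u : ℝ) * x u else 0) - (G.dist u v : ℝ) * x v := by
    intro v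
    by_cases hv : u = v
    · subst hv; simp [SimpleGraph.dist_self]
    · simp [hv]
  simp only [Matrix.mulVec, dotProduct, distLapMatrix]
  rw [Finset.sum_congr rfl (fun v _ => h v), Finset.sum_sub_distrib, Finset.sum_ite_eq]
  simp only [Finset.mem_univ, if_true]
  have ht : (transmission G u : ℝ) = ∑ v, (G.dist u v : ℝ) := by
    rw [transmission]; push_cast; rfl
  rw [ht]
  rw [Finset.sum_mul]
  rw [← Finset.sum_sub_distrib]
  exact Finset.sum_congr rfl (fun v _ => by ring)

lemma backward {V : Type*} [Fintype V] [DecidableEq V] (G : SimpleGraph V)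
    (hn : 2 ≤ Fintype.card V) (hc : ¬ Gᶜ.Connected) :
    ∃ x : V → ℝ, x ≠ 0 ∧ (distLapMatrix G).mulVec x = (Fintype.card V : ℝ) • x := by
  classical
  have hne : Nonempty V := Fintype.card_pos_iff.mp (by omega)
  have hpre : ¬ Gᶜ.Preconnected := fun h => hc ((SimpleGraph.connected_iff Gᶜ).mpr ⟨h, hne⟩)
  simp only [SimpleGraph.Preconnected, not_forall] at hpre
  obtain ⟨u₀, w₀, hr⟩ := hpre
  set P : V → Prop := fun v => Gᶜ.Reachable u₀ v with hP
  have hPu₀ : P u₀ := SimpleGraph.Reachable.refl u₀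
  have hPw₀ : ¬ P w₀ := hr
  set a : ℕ := (Finset.univ.filter P).card with ha
  set b : ℕ := (Finset.univ.filter (fun v => ¬ P v)).card with hb
  have hnat : a + b = Fintype.card V := by
    rw [ha, hb, ← Finset.card_univ]
    exact Finset.card_filter_add_card_filter_not (p := P)
  have hab : (a : ℝ) + b = Fintype.card V := by exact_mod_cast hnat
  set x : V → ℝ := fun v => if P v then (b : ℝ) else -(a : ℝ) with hx
  have hbpos : 0 < b := Finset.card_pos.mpr ⟨w₀, by simp [hPw₀]⟩
  refine ⟨x, ?_, ?_⟩
  · intro h0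
    have : x u₀ = 0 := congrFun h0 u₀
    rw [hx] at this
    simp [hPu₀] at this
    omega
  · funext u
    rw [distLap_mulVec]
    -- distance 1 between different parts
    have hdist : ∀ u v : V, P u ≠ P v → (G.dist u v : ℝ) = 1 := by
      intro u v hpq
      have hne' : u ≠ v := fun h => hpq (by rw [h])
      have hadj : G.Adj u v := by
        by_contra hA
        have : Gᶜ.Adj u v := (SimpleGraph.compl_adj G u v).mpr ⟨hne', hA⟩
        have : P u ↔ P v := ⟨fun h => h.trans this.reachable, fun h => h.trans this.symm.reachable⟩
        exact hpq (by simp [eq_iff_iff, this])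
      rw [SimpleGraph.dist_eq_one_iff_adj.mpr hadj]; norm_num
    by_cases hu : P u
    · have hterm : ∀ v : V, (G.dist u v : ℝ) * (x u - x v)
          = if P v then 0 else (Fintype.card V : ℝ) := by
        intro v
        by_cases hv : P v
        · simp [hx, hu, hv]
        · rw [hdist u v (by simp [hu, hv])]
          simp only [hx, hu, hv, if_true, if_false, one_mul]
          rw [sub_neg_eq_add, add_comm]; exact hab
      rw [Finset.sum_congr rfl (fun v _ => hterm v)]
      rw [Finset.sum_ite, Finset.sum_const, Finset.sum_const]
      simp only [Pi.smul_apply, smul_eq_mul, hx, hu, if_true, smul_zero, zero_add, nsmul_eq_mul]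
      rw [show (Finset.univ.filter fun v => ¬ P v).card = b from rfl]
      ring
    · have hterm : ∀ v : V, (G.dist u v : ℝ) * (x u - x v)
          = if P v then -(Fintype.card V : ℝ) else 0 := by
        intro v
        by_cases hv : P v
        · rw [hdist u v (by simp [hu, hv])]
          simp only [hx, hu, hv, if_true, if_false, one_mul]
          rw [← hab]; ring
        · simp [hx, hu, hv]
      rw [Finset.sum_congr rfl (fun v _ => hterm v)]
      rw [Finset.sum_ite, Finset.sum_const, Finset.sum_const]
      simp only [Pi.smul_apply, smul_eq_mul, hx, hu, if_false, smul_zero, add_zero, nsmul_eq_mul]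
      rw [show (Finset.univ.filter P).card = a from rfl]
      ring

lemma forward {V : Type*} [Fintype V] [DecidableEq V] (G : SimpleGraph V)
    (hG : G.Connected) (hn : 2 ≤ Fintype.card V) (x : V → ℝ) (hx0 : x ≠ 0)
    (hev : (distLapMatrix G).mulVec x = (Fintype.card V : ℝ) • x)
    (hGc : Gᶜ.Connected) : False := by
  classical
  set n : ℝ := (Fintype.card V : ℝ) with hn'
  have hnpos : (0:ℝ) < n := by rw [hn']; exact_mod_cast (by omega : 0 < Fintype.card V)
  have hEq : ∀ u, ∑ v, (G.dist u v : ℝ) * (x u - x v) = n * x u := by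
    intro u
    rw [← distLap_mulVec, hev]; simp
  -- sum of x is zero
  have hsum0 : ∑ u, x u = 0 := by
    have hS : ∑ u, ∑ v, (G.dist u v : ℝ) * (x u - x v) = n * ∑ u, x u := by
      rw [Finset.mul_sum]; exact Finset.sum_congr rfl fun u _ => hEq u
    have hS2 : ∑ u, ∑ v, (G.dist u v : ℝ) * (x u - x v)
        = - ∑ u, ∑ v, (G.dist u v : ℝ) * (x u - x v) := by
      nth_rewrite 1 [Finset.sum_comm]
      rw [← Finset.sum_neg_distrib]
      refine Finset.sum_congr rfl fun w _ => ?_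
      rw [← Finset.sum_neg_distrib]
      refine Finset.sum_congr rfl fun u _ => ?_
      rw [SimpleGraph.dist_comm]; ring
    have : n * ∑ u, x u = 0 := by linarith [hS, hS2]
    exact (mul_eq_zero.mp this).resolve_left (ne_of_gt hnpos)
  -- quadratic form identity
  have hQ : ∑ u, ∑ v, (G.dist u v : ℝ) * (x u - x v)^2 = 2 * n * ∑ u, (x u)^2 := by
    have e1 : ∀ u v : V, (G.dist u v : ℝ) * (x u - x v)^2
        = x u * ((G.dist u v : ℝ) * (x u - x v)) - x v * ((G.dist u v : ℝ) * (x u - x v)) :=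
      fun u v => by ring
    simp_rw [e1, Finset.sum_sub_distrib]
    have p1 : ∑ u, ∑ v, x u * ((G.dist u v : ℝ) * (x u - x v)) = n * ∑ u, (x u)^2 := by
      rw [Finset.mul_sum]
      refine Finset.sum_congr rfl fun u _ => ?_
      rw [← Finset.mul_sum, hEq u]; ring
    have p2 : ∑ u, ∑ v, x v * ((G.dist u v : ℝ) * (x u - x v)) = - (n * ∑ u, (x u)^2) := by
      rw [Finset.sum_comm]
      have h3 : ∀ v, ∑ u, x v * ((G.dist u v : ℝ) * (x u - x v)) = -(n * (x v)^2) := by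
        intro v
        have h4 : ∀ u, x v * ((G.dist u v : ℝ) * (x u - x v))
            = -(x v * ((G.dist v u : ℝ) * (x v - x u))) := fun u => by
          rw [SimpleGraph.dist_comm]; ring
        simp_rw [h4, Finset.sum_neg_distrib, ← Finset.mul_sum, hEq v]; ring
      simp_rw [h3, Finset.sum_neg_distrib, ← Finset.mul_sum]
    rw [p1, p2]; ring
  -- plain sum of squares identity
  have hT : ∑ u, ∑ v, (x u - x v)^2 = 2 * n * ∑ u, (x u)^2 := by
    have hu : ∀ u : V, ∑ v, (x u - x v)^2 = n * (x u)^2 + ∑ v, (x v)^2 := by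
      intro u
      have e2 : ∀ v : V, (x u - x v)^2 = (x u)^2 - 2 * x u * x v + (x v)^2 := fun v => by ring
      simp_rw [e2, Finset.sum_add_distrib, Finset.sum_sub_distrib, Finset.sum_const,
        Finset.card_univ, nsmul_eq_mul]
      have : ∑ v, 2 * x u * x v = 2 * x u * ∑ v, x v := by rw [Finset.mul_sum]
      rw [this, hsum0, hn']; ring
    rw [Finset.sum_congr rfl fun u _ => hu u, Finset.sum_add_distrib, Finset.sum_const,
      Finset.card_univ, nsmul_eq_mul, ← Finset.mul_sum, ← hn']
    ring
  -- each term of the difference vanishes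
  have hnonneg : ∀ u v : V, 0 ≤ ((G.dist u v : ℝ) - 1) * (x u - x v)^2 := by
    intro u v
    rcases eq_or_ne u v with h | h
    · subst h; simp
    · have hd : 0 < G.dist u v := hG.pos_dist_of_ne h
      have hd' : (1:ℝ) ≤ (G.dist u v : ℝ) := by exact_mod_cast hd
      exact mul_nonneg (by linarith) (sq_nonneg _)
  have htot : ∑ u, ∑ v, ((G.dist u v : ℝ) - 1) * (x u - x v)^2 = 0 := by
    have e3 : ∀ u v : V, ((G.dist u v : ℝ) - 1) * (x u - x v)^2
        = (G.dist u v : ℝ) * (x u - x v)^2 - (x u - x v)^2 := fun u v => by ring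
    simp_rw [e3, Finset.sum_sub_distrib]
    rw [hQ, hT]; ring
  have hterm0 : ∀ u v : V, ((G.dist u v : ℝ) - 1) * (x u - x v)^2 = 0 := by
    intro u v
    have h1 := (Finset.sum_eq_zero_iff_of_nonneg
      (fun u _ => Finset.sum_nonneg fun v _ => hnonneg u v)).mp htot u (Finset.mem_univ u)
    exact (Finset.sum_eq_zero_iff_of_nonneg
      (fun v _ => hnonneg u v)).mp h1 v (Finset.mem_univ v)
  -- x is constant on complement edges
  have hconst : ∀ u v : V, Gᶜ.Adj u v → x u = x v := by
    intro u v hadj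
    obtain ⟨hne', hnadj⟩ := (SimpleGraph.compl_adj G u v).mp hadj
    have hd : 1 < G.dist u v := by
      have h1 : 0 < G.dist u v := hG.pos_dist_of_ne hne'
      have h2 : G.dist u v ≠ 1 := fun h => hnadj (SimpleGraph.dist_eq_one_iff_adj.mp h)
      omega
    have hd' : (1:ℝ) < (G.dist u v : ℝ) := by exact_mod_cast hd
    have := hterm0 u v
    rcases mul_eq_zero.mp this with h | h
    · linarith
    · have := pow_eq_zero_iff (n := 2) (by norm_num) |>.mp h
      linarith [sub_eq_zero.mp this]
  -- constant along walks in the complement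
  have hreach : ∀ u v : V, Gᶜ.Reachable u v → x u = x v := by
    intro u v h
    obtain ⟨p⟩ := h
    induction p with
    | nil => rfl
    | cons h p ih => exact (hconst _ _ h).trans ih
  obtain ⟨u₀⟩ := hGc.nonempty
  have hall : ∀ v, x v = x u₀ := fun v => (hreach u₀ v (hGc.preconnected u₀ v)).symm
  have : (Fintype.card V : ℝ) * x u₀ = 0 := by
    rw [← hsum0, Finset.sum_congr rfl fun v _ => hall v, Finset.sum_const, Finset.card_univ,
      nsmul_eq_mul]
  have hx0' : x u₀ = 0 := (mul_eq_zero.mp this).resolve_left (ne_of_gt hnpos)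
  exact hx0 (funext fun v => by rw [hall v, hx0']; rfl)

/-- For a connected graph `G` on `n ≥ 2` vertices, `n` is a distance Laplacian eigenvalue
if and only if the complement of `G` is disconnected. -/
theorem stmt_6 {V : Type*} [Fintype V] [DecidableEq V] (G : SimpleGraph V)
    (hG : G.Connected) (hn : 2 ≤ Fintype.card V) :
    IsEigenvalue (distLapMatrix G) (Fintype.card V : ℝ) ↔ ¬ Gᶜ.Connected := by
  constructor
  · intro h hGc
    obtain ⟨x, hx⟩ := Module.End.HasEigenvalue.exists_hasEigenvector h
    exact forward G hG hn x hx.right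
      (by rw [← Matrix.toLin'_apply]; exact hx.apply_eq_smul) hGc
  · intro hc
    obtain ⟨x, hx0, hxe⟩ := backward G hn hc
    exact Module.End.hasEigenvalue_of_hasEigenvector
      ⟨Module.End.mem_eigenspace_iff.mpr (by rw [Matrix.toLin'_apply]; exact hxe), hx0⟩
end

section
/- Let G be a connected graph on n vertices whose complement has exactly c connected components. Then the multiplicity of n as an eigenvalue of the distance Laplacian D^L(G) equals c - 1. -/
open Matrix

/-!
Put `w u v = d(u, v) - 1` (truncated, so `w u u = 0`): it is symmetric, nonnegative and nonzero
exactly on the edges of `Gᶜ`, and `(D^L x)_u = n x_u - ∑ x + ∑_v w u v (x_u - x_v)`. Hence `x` is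
an `n`-eigenvector iff the weighted Laplacian of `w` sends `x` to the constant vector `∑ x`. Summing
over `u` kills the left side, so `∑ x = 0`; then the quadratic form `½ ∑ w u v (x_u - x_v)²`
vanishes, so `x` is constant along the edges of `Gᶜ`. The eigenspace is thus the kernel of the
Laplacian of `Gᶜ`, of dimension `c`, cut by the hyperplane `∑ x = 0`, which misses the all-ones
vector.
-/

open Finset

section WeightedLaplacian

variable {V : Type*} [Fintype V] {w : V → V → ℝ}

theorem sum_sum_mul_sub_eq_zero (hw : ∀ u v, w u v = w v u) (x : V → ℝ) :
    ∑ u, ∑ v, w u v * (x u - x v) = 0 := by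
  have hswap : ∑ u, ∑ v, w u v * (x u - x v) = -∑ u, ∑ v, w u v * (x u - x v) := by
    conv_lhs => rw [sum_comm]
    simp only [← sum_neg_distrib]
    refine sum_congr rfl fun u _ => sum_congr rfl fun v _ => ?_
    rw [hw v u]; ring
  linarith

theorem sum_mul_sum_mul_sub_eq_half (hw : ∀ u v, w u v = w v u) (x : V → ℝ) :
    ∑ u, x u * ∑ v, w u v * (x u - x v) = (∑ u, ∑ v, w u v * (x u - x v) ^ 2) / 2 := by
  have hswap :
      ∑ u, x u * ∑ v, w u v * (x u - x v) = ∑ u, ∑ v, w u v * (x v * (x v - x u)) := by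
    rw [sum_comm (f := fun u v => w u v * (x v * (x v - x u)))]
    refine sum_congr rfl fun u _ => ?_
    rw [mul_sum]
    refine sum_congr rfl fun v _ => ?_
    rw [hw v u]; ring
  have hsq : ∑ u, ∑ v, w u v * (x u - x v) ^ 2
      = ∑ u, x u * ∑ v, w u v * (x u - x v) + ∑ u, ∑ v, w u v * (x v * (x v - x u)) := by
    simp only [mul_sum, ← sum_add_distrib]
    refine sum_congr rfl fun u _ => sum_congr rfl fun v _ => ?_
    ring
  linarith

theorem forall_sum_mul_sub_eq_iff [Nonempty V] (hw : ∀ u v, w u v = w v u)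
    (hw₀ : ∀ u v, 0 ≤ w u v) (x : V → ℝ) (s : ℝ) :
    (∀ u, ∑ v, w u v * (x u - x v) = s) ↔ s = 0 ∧ ∀ u v, w u v ≠ 0 → x u = x v := by
  constructor
  · intro h
    have hs : s = 0 := by
      have hsum := sum_sum_mul_sub_eq_zero hw x
      simp only [h, sum_const, card_univ, nsmul_eq_mul, mul_eq_zero] at hsum
      exact hsum.resolve_left (by simp)
    refine ⟨hs, fun u v huv => ?_⟩
    have hquad : ∑ u, ∑ v, w u v * (x u - x v) ^ 2 = 0 := by
      have := sum_mul_sum_mul_sub_eq_half hw x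
      simp only [h, hs, mul_zero, sum_const_zero] at this
      linarith
    have hnonneg : ∀ u v, 0 ≤ w u v * (x u - x v) ^ 2 := fun u v => by
      have := hw₀ u v; positivity
    rw [sum_eq_zero_iff_of_nonneg fun u _ => sum_nonneg fun v _ => hnonneg u v] at hquad
    have := (sum_eq_zero_iff_of_nonneg fun v _ => hnonneg u v).mp (hquad u (mem_univ u)) v
      (mem_univ v)
    simpa [huv, sub_eq_zero] using this
  · rintro ⟨rfl, hx⟩ u
    refine sum_eq_zero fun v _ => ?_
    by_cases huv : w u v = 0
    · simp [huv]
    · simp [hx u v huv]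

end WeightedLaplacian

theorem Submodule.finrank_inf_ker_add_one {K M : Type*} [Field K] [AddCommGroup M] [Module K M]
    {p : Submodule K M} [FiniteDimensional K p] {f : Module.Dual K M} {v : M} (hv : v ∈ p)
    (hfv : f v ≠ 0) :
    Module.finrank K (p ⊓ LinearMap.ker f : Submodule K M) + 1 = Module.finrank K p := by
  have hne : f.comp p.subtype ≠ 0 := fun h => hfv (LinearMap.congr_fun h ⟨v, hv⟩)
  rw [← Module.Dual.finrank_ker_add_one_of_ne_zero hne, LinearMap.ker_comp,
    ← Submodule.finrank_map_subtype_eq, Submodule.map_comap_subtype]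

namespace SimpleGraph

variable {V : Type*} {G : SimpleGraph V}

theorem Connected.one_lt_dist_iff (hG : G.Connected) {u v : V} :
    1 < G.dist u v ↔ Gᶜ.Adj u v := by
  rw [compl_adj, ← dist_eq_one_iff_adj, Ne, ← hG.dist_eq_zero_iff]
  omega

variable [Fintype V] [DecidableEq V]

theorem distLapMatrix_mulVec_apply (G : SimpleGraph V) (x : V → ℝ) (u : V) :
    (distLapMatrix G *ᵥ x) u = ∑ v, (G.dist u v : ℝ) * (x u - x v) := by
  have hentry : ∀ v, distLapMatrix G u v * x v
      = (if u = v then (transmission G u : ℝ) * x u else 0) - G.dist u v * x v := by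
    intro v
    by_cases huv : u = v <;> simp [distLapMatrix, huv]
  simp only [mulVec, dotProduct, hentry, sum_sub_distrib, sum_ite_eq, mem_univ, if_true,
    transmission, Nat.cast_sum, sum_mul, mul_sub]

theorem Connected.distLapMatrix_mulVec_apply (hG : G.Connected) (x : V → ℝ) (u : V) :
    (distLapMatrix G *ᵥ x) u = Fintype.card V * x u - ∑ v, x v
      + ∑ v, ((G.dist u v - 1 : ℕ) : ℝ) * (x u - x v) := by
  have hsplit : ∀ v, (G.dist u v : ℝ) * (x u - x v)
      = (x u - x v) + ((G.dist u v - 1 : ℕ) : ℝ) * (x u - x v) := by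
    intro v
    by_cases huv : u = v
    · simp [huv]
    · rw [Nat.cast_sub (hG.pos_dist_of_ne huv)]
      ring
  simp only [G.distLapMatrix_mulVec_apply, hsplit, sum_add_distrib, sum_sub_distrib, sum_const,
    card_univ, nsmul_eq_mul]

theorem Connected.distLapMatrix_mulVec_eq_card_smul_iff (hG : G.Connected) (x : V → ℝ) :
    distLapMatrix G *ᵥ x = (Fintype.card V : ℝ) • x ↔
      ∑ v, x v = 0 ∧ ∀ u v, Gᶜ.Adj u v → x u = x v := by
  have := hG.nonempty
  have hweight : ∀ u v, ((G.dist u v - 1 : ℕ) : ℝ) ≠ 0 ↔ Gᶜ.Adj u v := fun u v => by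
    rw [← hG.one_lt_dist_iff]
    simp only [ne_eq, Nat.cast_eq_zero]
    omega
  simp only [← hweight]
  rw [← forall_sum_mul_sub_eq_iff (fun u v => by rw [dist_comm]) (fun _ _ => Nat.cast_nonneg _),
    funext_iff]
  refine forall_congr' fun u => ?_
  rw [hG.distLapMatrix_mulVec_apply, Pi.smul_apply, smul_eq_mul]
  constructor <;> intro h <;> linarith

theorem Connected.eigenspace_distLapMatrix_card [DecidableRel G.Adj] (hG : G.Connected) :
    Module.End.eigenspace (toLin' (distLapMatrix G)) (Fintype.card V) =
      LinearMap.ker (toLin' (Gᶜ.lapMatrix ℝ)) ⊓ LinearMap.ker (∑ v, LinearMap.proj v) := by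
  ext x
  rw [Module.End.mem_eigenspace_iff, Submodule.mem_inf, LinearMap.mem_ker, LinearMap.mem_ker,
    toLin'_apply, toLin'_apply, hG.distLapMatrix_mulVec_eq_card_smul_iff,
    lapMatrix_mulVec_eq_zero_iff_forall_adj, LinearMap.sum_apply, and_comm]
  rfl

end SimpleGraph

/-- For a connected graph `G` on `n` vertices whose complement has exactly `c` connected
components, the multiplicity of `n` as a distance Laplacian eigenvalue is `c - 1`. -/
theorem stmt_7 {V : Type*} [Fintype V] [DecidableEq V] (G : SimpleGraph V)
    (hG : G.Connected) (c : ℕ) (hc : Nat.card Gᶜ.ConnectedComponent = c) :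
    eigMult (distLapMatrix G) (Fintype.card V : ℝ) = c - 1 := by
  classical
  have := hG.nonempty
  have hconst : (fun _ => (1 : ℝ)) ∈ LinearMap.ker (toLin' (Gᶜ.lapMatrix ℝ)) := by
    simp [SimpleGraph.lapMatrix_mulVec_eq_zero_iff_forall_adj]
  have hsum : (∑ v, LinearMap.proj v : Module.Dual ℝ (V → ℝ)) (fun _ => 1) ≠ 0 := by
    simp
  rw [eigMult, hG.eigenspace_distLapMatrix_card, ← hc, Nat.card_eq_fintype_card,
    SimpleGraph.card_connectedComponent_eq_finrank_ker_toLin'_lapMatrix,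
    ← Submodule.finrank_inf_ker_add_one hconst hsum, Nat.add_sub_cancel]
end

section
/- The distance Laplacian spectrum of the complete multipartite graph K_{t_1,...,t_k} on n = t_1 + ... + t_k vertices consists of: the eigenvalue n + t_i with multiplicity t_i - 1 for each i with t_i ≥ 2, the eigenvalue n with multiplicity k - 1, and the eigenvalue 0 with multiplicity 1. -/
open Matrix

/-!
Write `n` for the number of vertices and `t_i` for the part sizes. For the complete multipartite
graph, `(D^L x)(u) = (n + t_i) x_u - P_i - S` for `u` in part `i`, where `P_i` is the sum of `x`
over part `i` and `S` is the total sum. Summing the eigen-equation `D^L x = μ x` over part `i`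
gives `(n - μ) P_i = t_i S`, and summing that over all parts gives `μ S = 0`.

So for `μ = 0` the vector `x` is constant, for `μ = n` it is constant on parts with `S = 0`
(a hyperplane in `ℝ^k`), and for every other `μ` all `P_i` vanish and `x` is supported on the
parts with `n + t_i = μ`. For `μ = n + s` this is a kernel of dimension `∑_{t_i = s} (t_i - 1)`,
which is zero when `s = 1`.
-/

open Module Module.End

lemma Fintype.sum_ite_fst_eq {ι : Type*} {V : ι → Type*} [Fintype ι] [DecidableEq ι]
    [∀ i, Fintype (V i)] {M : Type*} [AddCommMonoid M] (x : (Σ i, V i) → M) (i : ι) :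
    ∑ v, (if i = v.1 then x v else 0) = ∑ b, x ⟨i, b⟩ := by
  rw [Fintype.sum_sigma, Fintype.sum_eq_single i (fun j hj => by simp [Ne.symm hj])]
  simp

instance Sigma.nonempty {ι : Type*} {V : ι → Type*} [Nonempty ι] [∀ i, Nonempty (V i)] :
    Nonempty (Σ i, V i) :=
  ⟨⟨Classical.arbitrary ι, Classical.arbitrary _⟩⟩

section partSum

variable {ι : Type*} {V : ι → Type*} [∀ i, Fintype (V i)]

def partSum : ((Σ i, V i) → ℝ) →ₗ[ℝ] (ι → ℝ) :=
  LinearMap.pi fun i => ∑ b, LinearMap.proj ⟨i, b⟩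

@[simp]
lemma partSum_apply (x : (Σ i, V i) → ℝ) (i : ι) : partSum x i = ∑ b, x ⟨i, b⟩ := by
  simp [partSum]

lemma partSum_eq_card_mul {x : (Σ i, V i) → ℝ} {i : ι} (h : ∀ a b, x ⟨i, a⟩ = x ⟨i, b⟩)
    (b : V i) : partSum x i = Fintype.card (V i) * x ⟨i, b⟩ := by
  simp [h _ b]

variable (V) (s : ℕ)

def partSumsAndRestriction : ((Σ i, V i) → ℝ) →ₗ[ℝ]
    ({i // Fintype.card (V i) = s} → ℝ) × ((Σ j : {i // Fintype.card (V i) ≠ s}, V j.1) → ℝ) :=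
  (LinearMap.funLeft ℝ ℝ Subtype.val ∘ₗ partSum).prod
    (LinearMap.funLeft ℝ ℝ fun w => ⟨w.1.1, w.2⟩)

lemma mem_ker_partSumsAndRestriction {x : (Σ i, V i) → ℝ} :
    x ∈ LinearMap.ker (partSumsAndRestriction V s)
      ↔ partSum x = 0 ∧ ∀ u : Σ i, V i, Fintype.card (V u.1) ≠ s → x u = 0 := by
  simp only [partSumsAndRestriction, LinearMap.ker_prod, Submodule.mem_inf, LinearMap.mem_ker,
    LinearMap.coe_comp, Function.comp_apply, funext_iff, LinearMap.funLeft_apply, Pi.zero_apply,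
    Subtype.forall, Sigma.forall]
  constructor
  · rintro ⟨hP, hsupp⟩
    refine ⟨fun i => ?_, fun i b hi => hsupp i hi b⟩
    by_cases hi : Fintype.card (V i) = s
    · exact hP i hi
    · simp [hsupp i hi]
  · rintro ⟨hP, hsupp⟩
    exact ⟨fun i _ => hP i, fun i hi b => hsupp i b hi⟩

lemma partSumsAndRestriction_surjective [∀ i, Nonempty (V i)] :
    Function.Surjective (partSumsAndRestriction V s) := by
  rintro ⟨c, y⟩
  refine ⟨fun v => if h : Fintype.card (V v.1) = s then c ⟨v.1, h⟩ / Fintype.card (V v.1)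
    else y ⟨⟨v.1, h⟩, v.2⟩, Prod.ext (funext fun i => ?_) (funext fun w => ?_)⟩
  · have hs : (s : ℝ) ≠ 0 := by exact_mod_cast i.2 ▸ Fintype.card_ne_zero
    simp [partSumsAndRestriction, i.2, mul_div_cancel₀ _ hs]
  · simp [partSumsAndRestriction, w.1.2]

lemma finrank_ker_partSumsAndRestriction [Fintype ι] [∀ i, Nonempty (V i)] :
    finrank ℝ (LinearMap.ker (partSumsAndRestriction V s))
      = ∑ i ∈ Finset.univ.filter (fun i => Fintype.card (V i) = s), (Fintype.card (V i) - 1) := by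
  have h := LinearMap.finrank_range_add_finrank_ker (partSumsAndRestriction V s)
  rw [LinearMap.range_eq_top.mpr (partSumsAndRestriction_surjective V s), finrank_top,
    finrank_prod, finrank_fintype_fun_eq_card, finrank_fintype_fun_eq_card,
    finrank_fintype_fun_eq_card, Fintype.card_sigma, Fintype.card_sigma, Fintype.card_subtype,
    ← Finset.sum_filter_add_sum_filter_not _ (fun i => Fintype.card (V i) = s),
    ← Finset.sum_subtype (Finset.univ.filter fun i => ¬Fintype.card (V i) = s) (by simp)
      (fun i => Fintype.card (V i)),
    Finset.card_eq_sum_ones] at h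
  have hpred : ∑ i ∈ Finset.univ.filter (fun i => Fintype.card (V i) = s), (Fintype.card (V i) - 1)
      + ∑ i ∈ Finset.univ.filter (fun i => Fintype.card (V i) = s), 1
      = ∑ i ∈ Finset.univ.filter (fun i => Fintype.card (V i) = s), Fintype.card (V i) := by
    rw [← Finset.sum_add_distrib]
    exact Finset.sum_congr rfl fun i _ => Nat.sub_add_cancel Fintype.card_pos
  omega

end partSum

namespace SimpleGraph.completeMultipartiteGraph

variable {ι : Type*} {V : ι → Type*}

lemma dist_of_fst_ne {u v : Σ i, V i} (h : u.1 ≠ v.1) :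
    (completeMultipartiteGraph V).dist u v = 1 :=
  dist_eq_one_iff_adj.mpr h

lemma dist_of_fst_eq [Nontrivial ι] [∀ i, Nonempty (V i)] {u v : Σ i, V i} (hne : u ≠ v)
    (h : u.1 = v.1) : (completeMultipartiteGraph V).dist u v = 2 := by
  obtain ⟨j, hj⟩ := exists_ne u.1
  have hw : ⟨j, Classical.arbitrary _⟩ ∈ (completeMultipartiteGraph V).commonNeighbors u v := by
    simp [mem_commonNeighbors, Ne.symm hj, ← h]
  have h2 : (completeMultipartiteGraph V).edist u v = 2 :=
    edist_eq_two_iff.mpr ⟨hne, fun hadj => hadj h, _, hw⟩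
  simp [dist, h2]

variable [Fintype ι] [DecidableEq ι] [∀ i, Fintype (V i)] [∀ i, DecidableEq (V i)]
  [Nontrivial ι] [∀ i, Nonempty (V i)]

local notation "L" => distLapMatrix (completeMultipartiteGraph V)
local notation "N" => (Fintype.card (Σ i, V i) : ℝ)

lemma transmission_eq (u : Σ i, V i) :
    (transmission (completeMultipartiteGraph V) u : ℝ) = N + Fintype.card (V u.1) - 2 := by
  have hdist : ∀ v, ((completeMultipartiteGraph V).dist u v : ℝ)
      = 1 + (if u.1 = v.1 then 1 else 0) - 2 * (if u = v then 1 else 0) := by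
    intro v
    by_cases huv : u = v
    · subst huv
      norm_num
    by_cases h : u.1 = v.1
    · rw [dist_of_fst_eq huv h, if_pos h, if_neg huv]
      norm_num
    · rw [dist_of_fst_ne h, if_neg h, if_neg huv]
      norm_num
  rw [transmission, Nat.cast_sum]
  simp only [hdist, Finset.sum_sub_distrib, Finset.sum_add_distrib, ← Finset.mul_sum,
    Fintype.sum_ite_fst_eq (fun _ => (1 : ℝ))]
  simp

lemma distLapMatrix_apply (u v : Σ i, V i) :
    L u v = (if u = v then N + Fintype.card (V u.1) else 0) - (if u.1 = v.1 then 1 else 0) - 1 := by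
  by_cases huv : u = v
  · subst huv
    rw [distLapMatrix, if_pos rfl, if_pos rfl, if_pos rfl, transmission_eq]
    ring
  by_cases h : u.1 = v.1
  · rw [distLapMatrix, if_neg huv, if_neg huv, if_pos h, dist_of_fst_eq huv h]
    norm_num
  · rw [distLapMatrix, if_neg huv, if_neg huv, if_neg h, dist_of_fst_ne h]
    norm_num

lemma distLapMatrix_mulVec (x : (Σ i, V i) → ℝ) (u : Σ i, V i) :
    (L *ᵥ x) u = (N + Fintype.card (V u.1)) * x u - partSum x u.1 - ∑ v, x v := by
  simp only [Matrix.mulVec, dotProduct, distLapMatrix_apply, sub_mul, ite_mul, zero_mul, one_mul,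
    Finset.sum_sub_distrib, Finset.sum_ite_eq, Finset.mem_univ, if_true, Fintype.sum_ite_fst_eq,
    partSum_apply]

lemma mem_eigenspace_iff {μ : ℝ} {x : (Σ i, V i) → ℝ} :
    x ∈ eigenspace (Matrix.toLin' L) μ
      ↔ ∀ u, (N + Fintype.card (V u.1) - μ) * x u = partSum x u.1 + ∑ v, x v := by
  rw [Module.End.mem_eigenspace_iff, Matrix.toLin'_apply, funext_iff]
  refine forall_congr' fun u => ?_
  rw [distLapMatrix_mulVec, Pi.smul_apply, smul_eq_mul]
  constructor <;> intro h <;> linarith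

section eigenvector

variable {μ : ℝ} {x : (Σ i, V i) → ℝ}
  (hx : x ∈ eigenspace (Matrix.toLin' (distLapMatrix (completeMultipartiteGraph V))) μ)
include hx

lemma sub_mul_partSum (i : ι) : (N - μ) * partSum x i = Fintype.card (V i) * ∑ v, x v := by
  have h : ∑ b : V i, (N + Fintype.card (V i) - μ) * x ⟨i, b⟩
      = ∑ b : V i, (partSum x i + ∑ v, x v) :=
    Finset.sum_congr rfl fun b _ => mem_eigenspace_iff.mp hx ⟨i, b⟩
  rw [← Finset.mul_sum, Finset.sum_const, Finset.card_univ, nsmul_eq_mul] at h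
  rw [partSum_apply] at h ⊢
  linear_combination h

lemma mul_sum_eq_zero : μ * ∑ v, x v = 0 := by
  have h : (N - μ) * ∑ v, x v = N * ∑ v, x v :=
    calc (N - μ) * ∑ v, x v = ∑ i, (N - μ) * partSum x i := by
          simp [Fintype.sum_sigma, Finset.mul_sum]
      _ = ∑ i, (Fintype.card (V i) : ℝ) * ∑ v, x v := by simp only [sub_mul_partSum hx]
      _ = N * ∑ v, x v := by rw [← Finset.sum_mul, Fintype.card_sigma, Nat.cast_sum]
  linarith

lemma apply_eq_of_ne {i : ι} (hi : N + Fintype.card (V i) ≠ μ) (a b : V i) :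
    x ⟨i, a⟩ = x ⟨i, b⟩ :=
  mul_left_cancel₀ (sub_ne_zero.mpr hi)
    ((mem_eigenspace_iff.mp hx ⟨i, a⟩).trans (mem_eigenspace_iff.mp hx ⟨i, b⟩).symm)

end eigenvector

theorem eigenspace_zero : eigenspace (Matrix.toLin' L) 0 = ℝ ∙ 1 := by
  ext x
  rw [Submodule.mem_span_singleton]
  constructor
  · intro hx
    have hconst : ∀ u, N * x u = ∑ v, x v := fun ⟨i, b⟩ => by
      have h := mem_eigenspace_iff.mp hx ⟨i, b⟩
      rw [partSum_eq_card_mul (apply_eq_of_ne hx (by positivity)) b] at h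
      linear_combination h
    refine ⟨(∑ v, x v) / N, funext fun u => ?_⟩
    rw [Pi.smul_apply, Pi.one_apply, smul_eq_mul, mul_one, ← hconst u,
      mul_div_cancel_left₀ _ (by positivity)]
  · rintro ⟨a, rfl⟩
    refine mem_eigenspace_iff.mpr fun u => ?_
    simp only [Pi.smul_apply, Pi.one_apply, smul_eq_mul, mul_one, partSum_apply,
      Finset.sum_const, Finset.card_univ, nsmul_eq_mul]
    ring

theorem finrank_eigenspace_zero : finrank ℝ (eigenspace (Matrix.toLin' L) 0) = 1 := by
  rw [eigenspace_zero, finrank_span_singleton one_ne_zero]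

theorem eigenspace_card :
    eigenspace (Matrix.toLin' L) N
      = (LinearMap.ker (Fintype.linearCombination ℝ fun i => (Fintype.card (V i) : ℝ))).map
          (LinearMap.funLeft ℝ ℝ Sigma.fst) := by
  ext x
  simp only [Submodule.mem_map, LinearMap.mem_ker, Fintype.linearCombination_apply, smul_eq_mul]
  have ht : ∀ i, (Fintype.card (V i) : ℝ) ≠ 0 := fun i => by positivity
  constructor
  · intro hx
    have hS : ∑ v, x v = 0 :=
      (mul_eq_zero.mp (mul_sum_eq_zero hx)).resolve_left (by positivity)
    have hpart : ∀ u : Σ i, V i, Fintype.card (V u.1) * x u = partSum x u.1 := fun u => by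
      linear_combination (mem_eigenspace_iff.mp hx u) + hS
    refine ⟨fun i => partSum x i / Fintype.card (V i), ?_, funext fun u => ?_⟩
    · rw [← hS, Fintype.sum_sigma]
      exact Finset.sum_congr rfl fun i _ => by rw [div_mul_cancel₀ _ (ht i), partSum_apply]
    · rw [LinearMap.funLeft_apply, ← hpart u, mul_div_cancel_left₀ _ (ht u.1)]
  · rintro ⟨c, hc, rfl⟩
    have hS : ∑ v : Σ i, V i, c v.1 = 0 := by
      rw [← hc, Fintype.sum_sigma]
      simp [mul_comm]
    refine mem_eigenspace_iff.mpr fun u => ?_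
    simp only [LinearMap.funLeft_apply, hS, partSum_apply, Finset.sum_const, Finset.card_univ,
      nsmul_eq_mul]
    ring

theorem finrank_eigenspace_card :
    finrank ℝ (eigenspace (Matrix.toLin' L) N) = Fintype.card ι - 1 := by
  have hw : (Fintype.linearCombination ℝ fun i => (Fintype.card (V i) : ℝ)) ≠ 0 := fun h => by
    have h1 := LinearMap.congr_fun h 1
    simp [Fintype.linearCombination_apply, ← Nat.cast_sum, ← Fintype.card_sigma] at h1
  have hinj : Function.Injective (LinearMap.funLeft ℝ ℝ (Sigma.fst : (Σ i, V i) → ι)) :=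
    LinearMap.funLeft_injective_of_surjective _ _ _ fun i => ⟨⟨i, Classical.arbitrary _⟩, rfl⟩
  have hker := Module.Dual.finrank_ker_add_one_of_ne_zero hw
  rw [finrank_fintype_fun_eq_card] at hker
  rw [eigenspace_card, ← LinearEquiv.finrank_eq (Submodule.equivMapOfInjective _ hinj _)]
  omega

lemma mem_eigenspace_iff_of_ne {μ : ℝ} (h0 : μ ≠ 0) (hN : μ ≠ N) {x : (Σ i, V i) → ℝ} :
    x ∈ eigenspace (Matrix.toLin' L) μ
      ↔ partSum x = 0 ∧ ∀ u, N + Fintype.card (V u.1) ≠ μ → x u = 0 := by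
  constructor
  · intro hx
    have hS : ∑ v, x v = 0 := (mul_eq_zero.mp (mul_sum_eq_zero hx)).resolve_left h0
    have hP : partSum x = 0 := funext fun i => by
      have h := sub_mul_partSum hx i
      rw [hS, mul_zero] at h
      exact (mul_eq_zero.mp h).resolve_left (sub_ne_zero.mpr hN.symm)
    refine ⟨hP, fun u hu => ?_⟩
    have h := mem_eigenspace_iff.mp hx u
    rw [hS, hP, Pi.zero_apply, add_zero] at h
    exact (mul_eq_zero.mp h).resolve_left (sub_ne_zero.mpr hu)
  · rintro ⟨hP, hsupp⟩
    have hS : ∑ v, x v = 0 := by simp [Fintype.sum_sigma, ← partSum_apply, hP]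
    refine mem_eigenspace_iff.mpr fun u => ?_
    rw [hS, hP, Pi.zero_apply, add_zero]
    by_cases hu : N + Fintype.card (V u.1) = μ
    · rw [hu, sub_self, zero_mul]
    · rw [hsupp u hu, mul_zero]

theorem eigenspace_card_add {s : ℕ} (hs : s ≠ 0) :
    eigenspace (Matrix.toLin' L) (N + s) = LinearMap.ker (partSumsAndRestriction V s) := by
  have h0 : N + s ≠ 0 := by positivity
  have hN : N + s ≠ N := by simpa using hs
  ext x
  simp only [mem_eigenspace_iff_of_ne h0 hN, mem_ker_partSumsAndRestriction, ne_eq,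
    add_right_inj, Nat.cast_inj]

theorem finrank_eigenspace_card_add {s : ℕ} (hs : s ≠ 0) :
    finrank ℝ (eigenspace (Matrix.toLin' L) (N + s))
      = ∑ i ∈ Finset.univ.filter (fun i => Fintype.card (V i) = s), (Fintype.card (V i) - 1) := by
  rw [eigenspace_card_add hs, finrank_ker_partSumsAndRestriction]

theorem eq_zero_or_eq_card_or_of_hasEigenvalue {μ : ℝ} (hμ : HasEigenvalue (Matrix.toLin' L) μ) :
    μ = 0 ∨ μ = N ∨ ∃ i, 2 ≤ Fintype.card (V i) ∧ μ = N + Fintype.card (V i) := by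
  by_contra! h
  obtain ⟨h0, hN, hbig⟩ := h
  obtain ⟨x, hx, hx0⟩ := hμ.exists_hasEigenvector
  obtain ⟨hP, hsupp⟩ := (mem_eigenspace_iff_of_ne h0 hN).mp hx
  obtain ⟨⟨i, b⟩, hxu⟩ : ∃ u, x u ≠ 0 := Function.ne_iff.mp hx0
  have hi : N + Fintype.card (V i) = μ := by_contra fun h => hxu (hsupp _ h)
  have hsingle : Fintype.card (V i) ≤ 1 := by
    by_contra! h2
    exact hbig i h2 hi.symm
  have hconst : ∀ a a' : V i, x ⟨i, a⟩ = x ⟨i, a'⟩ := fun a a' => by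
    rw [Fintype.card_le_one_iff.mp hsingle a a']
  have h := congrFun hP i
  rw [partSum_eq_card_mul hconst b, Pi.zero_apply] at h
  exact hxu ((mul_eq_zero.mp h).resolve_left (by positivity))

end SimpleGraph.completeMultipartiteGraph

/-- The distance Laplacian spectrum of the complete multipartite graph `K_{t_1,…,t_k}` on
`n = t_1 + ⋯ + t_k` vertices: `n + t_i` with multiplicity `t_i - 1` for each part with
`t_i ≥ 2` (parts of equal size combining multiplicities), `n` with multiplicity `k - 1`,
and `0` with multiplicity `1`; and there are no other eigenvalues. -/
theorem stmt_8 (k n : ℕ) (hk : 2 ≤ k) (t : Fin k → ℕ) (ht : ∀ i, 1 ≤ t i)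
    (hn : n = ∑ i, t i)
    (M : Matrix (Σ i, Fin (t i)) (Σ i, Fin (t i)) ℝ)
    (hM : M = distLapMatrix (SimpleGraph.completeMultipartiteGraph (fun i => Fin (t i)))) :
    (∀ s : ℕ, 2 ≤ s →
      eigMult M ((n : ℝ) + s) = ∑ i ∈ Finset.univ.filter (fun i => t i = s), (t i - 1)) ∧
    eigMult M (n : ℝ) = k - 1 ∧
    eigMult M 0 = 1 ∧
    (∀ μ : ℝ, IsEigenvalue M μ →
      μ = 0 ∨ μ = (n : ℝ) ∨ ∃ i, 2 ≤ t i ∧ μ = (n : ℝ) + (t i : ℝ)) := by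
  open SimpleGraph.completeMultipartiteGraph in
  subst hM
  have : Nontrivial (Fin k) := Fin.nontrivial_iff_two_le.mpr hk
  have : ∀ i, Nonempty (Fin (t i)) := fun i => Fin.pos_iff_nonempty.mp (ht i)
  have hN : (n : ℝ) = Fintype.card (Σ i, Fin (t i)) := by simp [hn]
  rw [hN]
  unfold eigMult IsEigenvalue
  refine ⟨fun s hs => ?_, ?_, ?_, fun μ hμ => ?_⟩
  · simpa only [Fintype.card_fin] using
      finrank_eigenspace_card_add (V := fun i => Fin (t i)) (s := s) (by omega)
  · simpa only [Fintype.card_fin] using finrank_eigenspace_card (V := fun i => Fin (t i))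
  · exact finrank_eigenspace_zero
  · simpa only [Fintype.card_fin] using eq_zero_or_eq_card_or_of_hasEigenvalue hμ
end

section
/- The distance Laplacian spectrum of the complement of S_3 ∪ K_2 ∪ (n-5)K_1 (where S_3 is the path/star on 3 vertices) is: n + 3, n + 2, n + 1 each with multiplicity 1, n with multiplicity n - 4, and 0 with multiplicity 1. -/
open Matrix

/-- `S_3 ∪ K_2 ∪ (n-5)K_1`: star with center `0`, leaves `1,2`; edge `3-4`;
plus isolated vertices. -/
def s3K2Union (n : ℕ) : SimpleGraph (Fin n) :=
  SimpleGraph.fromRel (fun u v =>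
    (u.val = 0 ∧ (v.val = 1 ∨ v.val = 2)) ∨ (u.val = 3 ∧ v.val = 4))

/-! Write `H = S₃ ∪ K₂ ∪ (n-5)K₁`. Vertex `5` is isolated in `H`, hence universal in `Hᶜ`, so
two distinct vertices are at distance `2` in `Hᶜ` if they are adjacent in `H` and at distance `1`
otherwise. This gives `D^L(Hᶜ) = n I - J + L(H)` with `L(H)` the Laplacian of `H`, which acts as
`n + L(H)` on vectors with zero sum and kills the all-ones vector. The Laplacian eigenvectors
`(2,-1,-1)` and `(0,1,-1)` of the star and `(1,-1)` of the edge give the eigenvalues `n + 3`,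
`n + 1`, `n + 2`; the zero-sum vectors constant on the components of `H`, cut out by four linear
conditions, give `n` with multiplicity at least `n - 4`; the all-ones vector gives `0`. These
lower bounds add up to `n`, and eigenspaces of distinct eigenvalues are independent, so all of
them are equalities and there is no further eigenvalue. -/

open Module

namespace Module.End

variable {K V : Type*} [Field K] [AddCommGroup V] [Module K V] [FiniteDimensional K V]

theorem sum_finrank_eigenspace_le {ι : Type*} [Fintype ι] (f : End K V) {μ : ι → K}
    (hμ : Function.Injective μ) :
    ∑ i, finrank K (f.eigenspace (μ i)) ≤ finrank K V := by
  classical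
  rw [← Module.finrank_directSum]
  exact LinearMap.finrank_le_finrank_of_injective
    (f.eigenspaces_iSupIndep.comp hμ).dfinsupp_lsum_injective

theorem finrank_eigenspace_eq_of_sum_eq {ι : Type*} [Fintype ι] (f : End K V) {μ : ι → K}
    (hμ : Function.Injective μ) (d : ι → ℕ) (hd : ∀ i, d i ≤ finrank K (f.eigenspace (μ i)))
    (hsum : ∑ i, d i = finrank K V) :
    (∀ i, finrank K (f.eigenspace (μ i)) = d i) ∧
      ∀ ν, f.HasEigenvalue ν → ν ∈ Set.range μ := by
  have heq : ∀ i, finrank K (f.eigenspace (μ i)) = d i := fun i ↦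
    ((Finset.sum_eq_sum_iff_of_le fun i _ ↦ hd i).1
      (le_antisymm (Finset.sum_le_sum fun i _ ↦ hd i)
        ((f.sum_finrank_eigenspace_le hμ).trans hsum.ge)) i (Finset.mem_univ i)).symm
  refine ⟨heq, fun ν hν ↦ ?_⟩
  by_contra hνμ
  have hinj : Function.Injective (fun o : Option ι ↦ o.elim ν μ) := by
    rintro (_ | i) (_ | j) h
    all_goals simp_all [eq_comm, hμ.eq_iff]
  have hext : finrank K (f.eigenspace ν) + ∑ i, finrank K (f.eigenspace (μ i)) ≤
      finrank K V := by
    have h := f.sum_finrank_eigenspace_le hinj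
    rwa [Fintype.sum_option] at h
  rw [Finset.sum_congr rfl fun i _ ↦ heq i, hsum] at hext
  have hpos := Submodule.one_le_finrank_iff.2 (hasEigenvalue_iff.1 hν)
  omega

end Module.End

theorem Module.finrank_sub_card_le_finrank_iInf_ker {K V ι : Type*} [Field K] [AddCommGroup V]
    [Module K V] [FiniteDimensional K V] [Fintype ι] (ℓ : ι → Module.Dual K V) :
    finrank K V - Fintype.card ι ≤ finrank K ↥(⨅ i, LinearMap.ker (ℓ i)) := by
  rw [← LinearMap.ker_pi]
  have hrange := Submodule.finrank_le (LinearMap.range (LinearMap.pi ℓ))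
  rw [Module.finrank_fintype_fun_eq_card] at hrange
  have := LinearMap.finrank_range_add_finrank_ker (LinearMap.pi ℓ)
  omega

theorem one_le_eigMult_of_mulVec_eq {V : Type*} [Fintype V] [DecidableEq V] {M : Matrix V V ℝ}
    {μ : ℝ} {x : V → ℝ} (hx : x ≠ 0) (h : M *ᵥ x = μ • x) : 1 ≤ eigMult M μ :=
  Submodule.one_le_finrank_iff.2 <| (Submodule.ne_bot_iff _).2
    ⟨x, by rwa [Module.End.mem_eigenspace_iff, toLin'_apply], hx⟩

namespace SimpleGraph

variable {V : Type*} (H : SimpleGraph V) [DecidableRel H.Adj]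

theorem dist_compl_of_isolated {w : V} (hw : ∀ v, ¬ H.Adj w v) {u v : V} (huv : u ≠ v) :
    Hᶜ.dist u v = if H.Adj u v then 2 else 1 := by
  split_ifs with h
  · have huw : Hᶜ.Adj u w :=
      (compl_adj H u w).2 ⟨by rintro rfl; exact hw v h, fun h' ↦ hw u h'.symm⟩
    have hwv : Hᶜ.Adj w v := (compl_adj H w v).2 ⟨by rintro rfl; exact hw u h.symm, hw v⟩
    have hle : Hᶜ.dist u v ≤ 2 := by simpa using dist_le (huw.toWalk.append hwv.toWalk)
    have hne : Hᶜ.dist u v ≠ 1 := fun h1 ↦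
      ((compl_adj H u v).1 (dist_eq_one_iff_adj.1 h1)).2 h
    have hpos : 0 < Hᶜ.dist u v := (huw.reachable.trans hwv.reachable).pos_dist_of_ne huv
    omega
  · exact dist_eq_one_iff_adj.2 ((compl_adj H u v).2 ⟨huv, h⟩)

variable [Fintype V] [DecidableEq V]

theorem transmission_compl_of_isolated {w : V} (hw : ∀ v, ¬ H.Adj w v) (u : V) :
    transmission Hᶜ u = Fintype.card V - 1 + H.degree u := by
  have hdist : ∀ v, Hᶜ.dist u v = (if u ≠ v then 1 else 0) + if H.Adj u v then 1 else 0 := by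
    intro v
    by_cases huv : u = v
    · subst huv; simp
    · rw [dist_compl_of_isolated H hw huv]; split_ifs <;> simp_all
  simp only [transmission, hdist, Finset.sum_add_distrib, Finset.sum_boole, Finset.filter_ne,
    Finset.card_erase_of_mem (Finset.mem_univ u), Finset.card_univ, ← neighborFinset_eq_filter,
    card_neighborFinset_eq_degree, Nat.cast_id]

theorem distLapMatrix_compl_of_isolated {w : V} (hw : ∀ v, ¬ H.Adj w v) :
    distLapMatrix Hᶜ =
      (Fintype.card V : ℝ) • 1 - Matrix.of (fun _ _ ↦ 1) + H.lapMatrix ℝ := by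
  have hcard : 1 ≤ Fintype.card V := Fintype.card_pos_iff.2 ⟨w⟩
  ext u v
  by_cases huv : u = v
  · subst huv
    simp [distLapMatrix, transmission_compl_of_isolated H hw, lapMatrix, degMatrix, hcard]
  · rw [← ne_eq] at huv
    by_cases h : H.Adj u v <;>
      norm_num [distLapMatrix, dist_compl_of_isolated H hw huv, lapMatrix, degMatrix, huv, h]

theorem distLapMatrix_compl_mulVec_of_sum_eq_zero {w : V} (hw : ∀ v, ¬ H.Adj w v)
    {x : V → ℝ} (hx : ∑ v, x v = 0) :
    distLapMatrix Hᶜ *ᵥ x = (Fintype.card V : ℝ) • x + H.lapMatrix ℝ *ᵥ x := by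
  have hJ : (Matrix.of (fun _ _ ↦ 1) : Matrix V V ℝ) *ᵥ x = 0 := by
    ext u; simp [mulVec, dotProduct, hx]
  rw [distLapMatrix_compl_of_isolated H hw, add_mulVec, sub_mulVec, hJ, smul_mulVec,
    one_mulVec, sub_zero]

theorem distLapMatrix_compl_mulVec_const {w : V} (hw : ∀ v, ¬ H.Adj w v) :
    distLapMatrix Hᶜ *ᵥ (fun _ ↦ 1) = 0 := by
  rw [distLapMatrix_compl_of_isolated H hw, add_mulVec, sub_mulVec, smul_mulVec, one_mulVec,
    lapMatrix_mulVec_const_eq_zero]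
  ext u; simp [mulVec, dotProduct]

theorem lapMatrix_mulVec_apply_eq_sum (x : V → ℝ) (u : V) :
    (H.lapMatrix ℝ *ᵥ x) u = ∑ v, if H.Adj u v then x u - x v else 0 := by
  rw [lapMatrix_mulVec_apply, ← Finset.sum_filter, Finset.sum_sub_distrib,
    ← neighborFinset_eq_filter, Finset.sum_const, card_neighborFinset_eq_degree, nsmul_eq_mul]

end SimpleGraph

instance (n : ℕ) : DecidableRel (s3K2Union n).Adj := fun u v ↦ by
  unfold s3K2Union; infer_instance

theorem s3K2Union_adj_iff {n : ℕ} {u v : Fin n} : (s3K2Union n).Adj u v ↔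
    u.val ≠ v.val ∧ ((u.val = 0 ∧ (v.val = 1 ∨ v.val = 2)) ∨ (u.val = 3 ∧ v.val = 4) ∨
      (v.val = 0 ∧ (u.val = 1 ∨ u.val = 2)) ∨ (v.val = 3 ∧ u.val = 4)) := by
  simp only [s3K2Union, SimpleGraph.fromRel_adj, ne_eq, Fin.ext_iff]
  tauto

theorem s3K2Union_not_adj_five {n : ℕ} (hn : 6 ≤ n) (v : Fin n) :
    ¬ (s3K2Union n).Adj ⟨5, by omega⟩ v := by
  simp [s3K2Union_adj_iff]

/-- The Laplacian of `s3K2Union n`, acting on vectors indexed by `ℕ` so that it does not depend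
on `n`. -/
def s3K2Lap (g : ℕ → ℝ) : ℕ → ℝ
  | 0 => (g 0 - g 1) + (g 0 - g 2)
  | 1 => g 1 - g 0
  | 2 => g 2 - g 0
  | 3 => g 3 - g 4
  | 4 => g 4 - g 3
  | _ + 5 => 0

theorem sum_fin_eq_sum_range_five {n : ℕ} (hn : 5 ≤ n) {g : ℕ → ℝ} (hg : ∀ k, g (k + 5) = 0) :
    ∑ v : Fin n, g v = ∑ k ∈ Finset.range 5, g k := by
  rw [Fin.sum_univ_eq_sum_range g, ← Finset.sum_range_add_sum_Ico _ hn, add_eq_left]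
  refine Finset.sum_eq_zero fun k hk ↦ ?_
  obtain ⟨j, rfl⟩ := Nat.exists_eq_add_of_le' (Finset.mem_Ico.1 hk).1
  exact hg j

theorem lapMatrix_s3K2Union_mulVec_apply {n : ℕ} (hn : 5 ≤ n) (g : ℕ → ℝ) (u : Fin n) :
    ((s3K2Union n).lapMatrix ℝ *ᵥ fun v ↦ g v) u = s3K2Lap g u := by
  simp only [SimpleGraph.lapMatrix_mulVec_apply_eq_sum, s3K2Union_adj_iff]
  rw [sum_fin_eq_sum_range_five hn (g := fun k ↦ if (u.val ≠ k ∧ ((u.val = 0 ∧ (k = 1 ∨ k = 2)) ∨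
      (u.val = 3 ∧ k = 4) ∨ (k = 0 ∧ (u.val = 1 ∨ u.val = 2)) ∨ (k = 3 ∧ u.val = 4)))
      then g u - g k else 0) fun k ↦ if_neg (by omega)]
  rcases u with ⟨a, ha⟩
  rcases a with _ | _ | _ | _ | _ | a <;> simp [Finset.sum_range_succ, s3K2Lap]

theorem distLapMatrix_compl_s3K2Union_mulVec {n : ℕ} (hn : 6 ≤ n) {g : ℕ → ℝ} {μ : ℝ}
    (hg : ∀ k, g (k + 5) = 0) (hsum : ∑ k ∈ Finset.range 5, g k = 0)
    (hL : s3K2Lap g = μ • g) :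
    distLapMatrix (s3K2Union n)ᶜ *ᵥ (fun v : Fin n ↦ g v) =
      ((n : ℝ) + μ) • fun v : Fin n ↦ g v := by
  rw [SimpleGraph.distLapMatrix_compl_mulVec_of_sum_eq_zero _ (s3K2Union_not_adj_five hn)
    (by rwa [sum_fin_eq_sum_range_five (by omega) hg])]
  ext u
  simp [lapMatrix_s3K2Union_mulVec_apply (by omega : 5 ≤ n), hL, add_mul]

theorem one_le_eigMult_of_s3K2Lap_eq_smul {n : ℕ} (hn : 6 ≤ n) {g : ℕ → ℝ} {μ : ℝ}
    (hg : ∀ k, g (k + 5) = 0) (hsum : ∑ k ∈ Finset.range 5, g k = 0) (hg0 : g ≠ 0)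
    (hL : s3K2Lap g = μ • g) :
    1 ≤ eigMult (distLapMatrix (s3K2Union n)ᶜ) ((n : ℝ) + μ) := by
  refine one_le_eigMult_of_mulVec_eq ?_ (distLapMatrix_compl_s3K2Union_mulVec hn hg hsum hL)
  obtain ⟨k, hk⟩ := Function.ne_iff.1 hg0
  have hkn : k < n := by
    by_contra h
    obtain ⟨j, rfl⟩ := Nat.exists_eq_add_of_le' (show 5 ≤ k by omega)
    exact hk (hg j)
  exact Function.ne_iff.2 ⟨⟨k, hkn⟩, hk⟩

def starVec : ℕ → ℝ
  | 0 => 2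
  | 1 => -1
  | 2 => -1
  | _ + 3 => 0

def leafVec : ℕ → ℝ
  | 0 => 0
  | 1 => 1
  | 2 => -1
  | _ + 3 => 0

def edgeVec : ℕ → ℝ
  | 0 | 1 | 2 => 0
  | 3 => 1
  | 4 => -1
  | _ + 5 => 0

theorem s3K2Lap_starVec : s3K2Lap starVec = (3 : ℝ) • starVec := by
  funext k; rcases k with _ | _ | _ | _ | _ | k <;> norm_num [s3K2Lap, starVec]

theorem s3K2Lap_leafVec : s3K2Lap leafVec = (1 : ℝ) • leafVec := by
  funext k; rcases k with _ | _ | _ | _ | _ | k <;> norm_num [s3K2Lap, leafVec]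

theorem s3K2Lap_edgeVec : s3K2Lap edgeVec = (2 : ℝ) • edgeVec := by
  funext k; rcases k with _ | _ | _ | _ | _ | k <;> norm_num [s3K2Lap, edgeVec]

theorem one_le_eigMult_distLapMatrix_compl_s3K2Union_zero {n : ℕ} (hn : 6 ≤ n) :
    1 ≤ eigMult (distLapMatrix (s3K2Union n)ᶜ) 0 :=
  one_le_eigMult_of_mulVec_eq (x := fun _ ↦ 1) (Function.ne_iff.2 ⟨⟨0, by omega⟩, one_ne_zero⟩)
    ((SimpleGraph.distLapMatrix_compl_mulVec_const _ (s3K2Union_not_adj_five hn)).trans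
      (zero_smul _ _).symm)

theorem one_le_eigMult_distLapMatrix_compl_s3K2Union_add_one {n : ℕ} (hn : 6 ≤ n) :
    1 ≤ eigMult (distLapMatrix (s3K2Union n)ᶜ) ((n : ℝ) + 1) :=
  one_le_eigMult_of_s3K2Lap_eq_smul hn (fun _ ↦ rfl)
    (by norm_num [Finset.sum_range_succ, leafVec]) (Function.ne_iff.2 ⟨1, by norm_num [leafVec]⟩)
    s3K2Lap_leafVec

theorem one_le_eigMult_distLapMatrix_compl_s3K2Union_add_two {n : ℕ} (hn : 6 ≤ n) :
    1 ≤ eigMult (distLapMatrix (s3K2Union n)ᶜ) ((n : ℝ) + 2) :=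
  one_le_eigMult_of_s3K2Lap_eq_smul hn (fun _ ↦ rfl)
    (by norm_num [Finset.sum_range_succ, edgeVec]) (Function.ne_iff.2 ⟨3, by norm_num [edgeVec]⟩)
    s3K2Lap_edgeVec

theorem one_le_eigMult_distLapMatrix_compl_s3K2Union_add_three {n : ℕ} (hn : 6 ≤ n) :
    1 ≤ eigMult (distLapMatrix (s3K2Union n)ᶜ) ((n : ℝ) + 3) :=
  one_le_eigMult_of_s3K2Lap_eq_smul hn (fun _ ↦ rfl)
    (by norm_num [Finset.sum_range_succ, starVec]) (Function.ne_iff.2 ⟨0, by norm_num [starVec]⟩)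
    s3K2Lap_starVec

theorem sub_four_le_eigMult_distLapMatrix_compl_s3K2Union {n : ℕ} (hn : 6 ≤ n) :
    n - 4 ≤ eigMult (distLapMatrix (s3K2Union n)ᶜ) n := by
  let π : Fin n → Module.Dual ℝ (Fin n → ℝ) := LinearMap.proj
  -- the common kernel: vectors constant on the components of `s3K2Union n`, with zero sum
  let ℓ : Fin 4 → Module.Dual ℝ (Fin n → ℝ) :=
    ![π ⟨0, by omega⟩ - π ⟨1, by omega⟩, π ⟨0, by omega⟩ - π ⟨2, by omega⟩,
      π ⟨3, by omega⟩ - π ⟨4, by omega⟩, ∑ v, π v]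
  have hker : ⨅ j, LinearMap.ker (ℓ j) ≤
      Module.End.eigenspace (toLin' (distLapMatrix (s3K2Union n)ᶜ)) n := by
    intro x hx
    simp only [Submodule.mem_iInf, LinearMap.mem_ker] at hx
    have h01 : x ⟨0, by omega⟩ = x ⟨1, by omega⟩ := sub_eq_zero.1 (by simpa [ℓ, π] using hx 0)
    have h02 : x ⟨0, by omega⟩ = x ⟨2, by omega⟩ := sub_eq_zero.1 (by simpa [ℓ, π] using hx 1)
    have h34 : x ⟨3, by omega⟩ = x ⟨4, by omega⟩ := sub_eq_zero.1 (by simpa [ℓ, π] using hx 2)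
    have hsum : ∑ v, x v = 0 := by simpa [ℓ, π] using hx 3
    have hconst : ∀ u v, (s3K2Union n).Adj u v → x u = x v := by
      rintro ⟨a, ha⟩ ⟨b, hb⟩ h
      rw [s3K2Union_adj_iff] at h
      rcases h with ⟨-, ⟨rfl, rfl | rfl⟩ | ⟨rfl, rfl⟩ | ⟨rfl, rfl | rfl⟩ | ⟨rfl, rfl⟩⟩
      exacts [h01, h02, h34, h01.symm, h02.symm, h34.symm]
    rw [Module.End.mem_eigenspace_iff, toLin'_apply,
      SimpleGraph.distLapMatrix_compl_mulVec_of_sum_eq_zero _ (s3K2Union_not_adj_five hn) hsum,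
      (SimpleGraph.lapMatrix_mulVec_eq_zero_iff_forall_adj _).2 hconst, add_zero,
      Fintype.card_fin]
  calc n - 4 = finrank ℝ (Fin n → ℝ) - Fintype.card (Fin 4) := by simp
    _ ≤ _ := Module.finrank_sub_card_le_finrank_iInf_ker ℓ
    _ ≤ _ := Submodule.finrank_mono hker

/-- The distance Laplacian spectrum of the complement of `S_3 ∪ K_2 ∪ (n-5)K_1` is
`n+3`, `n+2`, `n+1` each with multiplicity `1`, `n` with multiplicity `n-4`, and `0`
with multiplicity `1`. -/
theorem stmt_16 (n : ℕ) (hn : 6 ≤ n)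
    (M : Matrix (Fin n) (Fin n) ℝ) (hM : M = distLapMatrix (s3K2Union n)ᶜ) :
    eigMult M ((n : ℝ) + 3) = 1 ∧
    eigMult M ((n : ℝ) + 2) = 1 ∧
    eigMult M ((n : ℝ) + 1) = 1 ∧
    eigMult M (n : ℝ) = n - 4 ∧
    eigMult M 0 = 1 ∧
    (∀ μ : ℝ, IsEigenvalue M μ →
      μ = 0 ∨ μ = (n : ℝ) ∨ μ = (n : ℝ) + 1 ∨ μ = (n : ℝ) + 2 ∨ μ = (n : ℝ) + 3) := by
  subst hM
  have hinj : Function.Injective ![(0 : ℝ), n, n + 1, n + 2, n + 3] := by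
    have : (0 : ℝ) < n := by positivity
    intro i j h
    fin_cases i <;> fin_cases j <;> simp at h ⊢ <;> linarith
  have hbound : ∀ i, ![1, n - 4, 1, 1, 1] i ≤
      eigMult (distLapMatrix (s3K2Union n)ᶜ) (![(0 : ℝ), n, n + 1, n + 2, n + 3] i) := by
    intro i
    fin_cases i
    exacts [one_le_eigMult_distLapMatrix_compl_s3K2Union_zero hn,
      sub_four_le_eigMult_distLapMatrix_compl_s3K2Union hn,
      one_le_eigMult_distLapMatrix_compl_s3K2Union_add_one hn,
      one_le_eigMult_distLapMatrix_compl_s3K2Union_add_two hn,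
      one_le_eigMult_distLapMatrix_compl_s3K2Union_add_three hn]
  obtain ⟨hmult, hspec⟩ := End.finrank_eigenspace_eq_of_sum_eq _ hinj _ hbound <| by
    simp only [Fin.sum_univ_five, cons_val, finrank_fintype_fun_eq_card, Fintype.card_fin]
    omega
  refine ⟨hmult 4, hmult 3, hmult 2, hmult 1, hmult 0, fun μ hμ ↦ ?_⟩
  obtain ⟨i, rfl⟩ := hspec μ hμ
  fin_cases i <;> simp
end

section
/- Let G be a graph on n ≥ 3 vertices whose Laplacian matrix has exactly two distinct nonzero eigenvalues 0 < α < β, with α of multiplicity n - 2. Then G is isomorphic to the complete bipartite graph K_{n/2,n/2} (so n is even) or the star S_n. -/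
open Matrix

/-- Complete multipartite graph on `Fin n` determined by a block function. -/
def multipartiteOn (n : ℕ) (blk : Fin n → ℕ) : SimpleGraph (Fin n) :=
  SimpleGraph.fromRel (fun u v => blk u ≠ blk v)

/-- The star `S_n` on `Fin n` with center `0`. -/
def starGraph (n : ℕ) : SimpleGraph (Fin n) :=
  SimpleGraph.fromRel (fun u v => u.val = 0)

/-!
Let `w` be a `β`-eigenvector of `L = L(G)`. Since `L` is symmetric, its eigenspaces are
orthogonal; as `𝟙`, `w` and the `α`-eigenspace span `ℝⁿ`, this forces the spectral decomposition
`L = α (I - J / n) + c w wᵀ` with `c = (β - α) / ‖w‖² > 0`. Reading off an entry `i ≠ j` gives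
`c wᵢ wⱼ = α / n - [i ~ j]`, so `i ~ j` iff `wᵢ wⱼ < 0`: `G` is complete bipartite between the
positive and the negative entries of `w`, and `w` is constant on each side. If both sides have two
vertices, non-adjacency inside each side gives `w₊² = w₋²`, and `∑ wᵢ = 0` makes the sides equal.
-/

open Module Finset

namespace Matrix

variable {ι : Type*} [Fintype ι] {A : Matrix ι ι ℝ}

theorem mem_eigenspace_toLin'_iff [DecidableEq ι] {μ : ℝ} {x : ι → ℝ} :
    x ∈ End.eigenspace (toLin' A) μ ↔ A *ᵥ x = μ • x := by
  rw [End.mem_eigenspace_iff, toLin'_apply]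

theorem IsSymm.dotProduct_eq_zero_of_mulVec_eq_smul (hA : A.IsSymm) {μ ν : ℝ} {x y : ι → ℝ}
    (hx : A *ᵥ x = μ • x) (hy : A *ᵥ y = ν • y) (hμν : μ ≠ ν) : x ⬝ᵥ y = 0 := by
  have hself : (A *ᵥ x) ⬝ᵥ y = x ⬝ᵥ (A *ᵥ y) := by
    rw [dotProduct_mulVec, ← mulVec_transpose, hA.eq]
  rw [hx, hy, smul_dotProduct, dotProduct_smul, smul_eq_mul, smul_eq_mul] at hself
  exact (mul_eq_mul_right_iff.mp hself).resolve_left hμν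

theorem IsSymm.eigenspace_sup_span_sup_span_eq_top [DecidableEq ι] (hA : A.IsSymm)
    {α μ ν : ℝ} {u w : ι → ℝ} (hu : A *ᵥ u = μ • u) (hw : A *ᵥ w = ν • w) (hu0 : u ≠ 0)
    (hw0 : w ≠ 0) (hμα : μ ≠ α) (hνα : ν ≠ α) (hμν : μ ≠ ν)
    (hα : finrank ℝ (End.eigenspace (toLin' A) α) + 2 = Fintype.card ι) :
    End.eigenspace (toLin' A) α ⊔ Submodule.span ℝ {u} ⊔ Submodule.span ℝ {w} = ⊤ := by
  set E := End.eigenspace (toLin' A) α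
  have hu_notMem : u ∉ E := fun h => hu0 <| dotProduct_self_eq_zero.mp <|
    hA.dotProduct_eq_zero_of_mulVec_eq_smul hu (mem_eigenspace_toLin'_iff.mp h) hμα
  have hw_notMem : w ∉ E ⊔ Submodule.span ℝ {u} := by
    intro h
    obtain ⟨x, hx, y, hy, rfl⟩ := Submodule.mem_sup.mp h
    obtain ⟨t, rfl⟩ := Submodule.mem_span_singleton.mp hy
    apply hw0
    rw [← dotProduct_self_eq_zero, dotProduct_add, hA.dotProduct_eq_zero_of_mulVec_eq_smul hw
      (mem_eigenspace_toLin'_iff.mp hx) hνα, dotProduct_smul,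
      hA.dotProduct_eq_zero_of_mulVec_eq_smul hw hu hμν.symm, smul_zero, add_zero]
  apply Submodule.eq_top_of_finrank_eq
  rw [Submodule.finrank_sup_span_singleton hw_notMem,
    Submodule.finrank_sup_span_singleton hu_notMem, finrank_pi, ← hα]

theorem IsSymm.eq_add_vecMulVec_of_finrank_eigenspace [DecidableEq ι] (hA : A.IsSymm)
    {α μ ν : ℝ} {u w : ι → ℝ} (hu : A *ᵥ u = μ • u) (hw : A *ᵥ w = ν • w) (hu0 : u ≠ 0)
    (hw0 : w ≠ 0) (hμα : μ ≠ α) (hνα : ν ≠ α) (hμν : μ ≠ ν)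
    (hα : finrank ℝ (End.eigenspace (toLin' A) α) + 2 = Fintype.card ι) :
    A = α • 1 + ((μ - α) / (u ⬝ᵥ u)) • vecMulVec u u + ((ν - α) / (w ⬝ᵥ w)) • vecMulVec w w := by
  have huw : u ⬝ᵥ w = 0 := hA.dotProduct_eq_zero_of_mulVec_eq_smul hu hw hμν
  have huu : u ⬝ᵥ u ≠ 0 := dotProduct_self_eq_zero.not.mpr hu0
  have hww : w ⬝ᵥ w ≠ 0 := dotProduct_self_eq_zero.not.mpr hw0
  set M := α • 1 + ((μ - α) / (u ⬝ᵥ u)) • vecMulVec u u + ((ν - α) / (w ⬝ᵥ w)) • vecMulVec w w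
  have hM : ∀ x, M *ᵥ x =
      α • x + ((μ - α) / (u ⬝ᵥ u) * (u ⬝ᵥ x)) • u + ((ν - α) / (w ⬝ᵥ w) * (w ⬝ᵥ x)) • w := by
    intro x
    simp [M, add_mulVec, smul_mulVec, vecMulVec_mulVec, mul_smul]
  apply toLin'.injective
  refine LinearMap.ext_on_codisjoint (codisjoint_iff.mpr
      (hA.eigenspace_sup_span_sup_span_eq_top hu hw hu0 hw0 hμα hνα hμν hα))
    (LinearMap.eqOn_sup ?_ (LinearMap.eqOn_span' ?_)) (LinearMap.eqOn_span' ?_)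
  · intro x hx
    replace hx : A *ᵥ x = α • x := mem_eigenspace_toLin'_iff.mp hx
    simp [toLin'_apply, hM, hx, hA.dotProduct_eq_zero_of_mulVec_eq_smul hu hx hμα,
      hA.dotProduct_eq_zero_of_mulVec_eq_smul hw hx hνα]
  · simp only [Set.eqOn_singleton, toLin'_apply, hM, hu, dotProduct_comm w u, huw]
    rw [mul_zero, zero_smul, add_zero, div_mul_cancel₀ _ huu, ← add_smul, add_sub_cancel]
  · simp only [Set.eqOn_singleton, toLin'_apply, hM, hw, huw]
    rw [mul_zero, zero_smul, add_zero, div_mul_cancel₀ _ hww, ← add_smul, add_sub_cancel]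

end Matrix

namespace SimpleGraph

variable {V : Type*}

def IsCompleteBipartiteOn (G : SimpleGraph V) (s : Finset V) : Prop :=
  ∀ u v, G.Adj u v ↔ (u ∈ s ↔ v ∉ s)

theorem IsCompleteBipartiteOn.nonempty_iso [Fintype V] [DecidableEq V] {G H : SimpleGraph V}
    {s t : Finset V} (hG : G.IsCompleteBipartiteOn s) (hH : H.IsCompleteBipartiteOn t)
    (hst : #s = #t) : Nonempty (G ≃g H) := by
  have hcompl : Fintype.card {x // x ∉ s} = Fintype.card {x // x ∉ t} := by
    simp [Fintype.card_subtype_compl, hst]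
  let σ : Equiv.Perm V := Equiv.subtypeCongr (s.equivOfCardEq hst) (Fintype.equivOfCardEq hcompl)
  have hσ : ∀ x, σ x ∈ t ↔ x ∈ s := by
    intro x
    by_cases hx : x ∈ s
    · simp [σ, Equiv.subtypeCongr, Equiv.sumCompl_symm_apply_of_pos hx, hx]
    · simpa [σ, Equiv.subtypeCongr, Equiv.sumCompl_symm_apply_of_neg hx, hx]
        using ((Fintype.equivOfCardEq hcompl) ⟨x, hx⟩).2
  exact ⟨⟨σ, fun {u v} => by rw [hH, hG, hσ, hσ]⟩⟩

variable {G : SimpleGraph V} [DecidableRel G.Adj] {w : V → ℝ} {a c : ℝ}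

theorem mul_eq_sub_one_of_adj
    (hG : ∀ i j, i ≠ j → c * (w i * w j) = a - if G.Adj i j then 1 else 0) {i j : V}
    (h : G.Adj i j) : c * (w i * w j) = a - 1 := by
  simpa [h] using hG i j h.ne

theorem mul_eq_of_not_adj
    (hG : ∀ i j, i ≠ j → c * (w i * w j) = a - if G.Adj i j then 1 else 0) {i j : V}
    (hij : i ≠ j) (h : ¬G.Adj i j) : c * (w i * w j) = a := by
  simpa [h] using hG i j hij

theorem adj_of_mul_neg (hc : 0 < c) (ha : 0 < a)
    (hG : ∀ i j, i ≠ j → c * (w i * w j) = a - if G.Adj i j then 1 else 0) {i j : V}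
    (h : w i * w j < 0) : G.Adj i j := by
  have hij : i ≠ j := by
    rintro rfl
    exact (mul_self_nonneg (w i)).not_gt h
  by_contra hnadj
  have := mul_eq_of_not_adj hG hij hnadj
  nlinarith

theorem adj_iff_mul_neg (hc : 0 < c) (ha : 0 < a) (ha1 : a < 1)
    (hG : ∀ i j, i ≠ j → c * (w i * w j) = a - if G.Adj i j then 1 else 0) {i j : V} :
    G.Adj i j ↔ w i * w j < 0 := by
  refine ⟨fun h => ?_, adj_of_mul_neg hc ha hG⟩
  have := mul_eq_sub_one_of_adj hG h
  nlinarith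

theorem eq_of_mul_neg_of_mul_neg (hc : 0 < c) (ha : 0 < a)
    (hG : ∀ i j, i ≠ j → c * (w i * w j) = a - if G.Adj i j then 1 else 0) {i j k : V}
    (hi : w i * w k < 0) (hj : w j * w k < 0) : w i = w j := by
  have hk : w k ≠ 0 := right_ne_zero_of_mul hi.ne
  have h := (mul_eq_sub_one_of_adj hG (adj_of_mul_neg hc ha hG hi)).trans
    (mul_eq_sub_one_of_adj hG (adj_of_mul_neg hc ha hG hj)).symm
  exact mul_right_cancel₀ hk (mul_left_cancel₀ hc.ne' h)

variable [Fintype V]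

theorem card_eq_card_of_one_lt_card (hc : 0 < c) (ha : 0 < a)
    (hG : ∀ i j, i ≠ j → c * (w i * w j) = a - if G.Adj i j then 1 else 0)
    (hsum : ∑ i, w i = 0) (hne : ∀ i, w i ≠ 0) (hadj : ∀ i j, G.Adj i j ↔ w i * w j < 0)
    (hP : 1 < #{i | 0 < w i}) (hQ : 1 < #{i | w i < 0}) :
    #{i | 0 < w i} = #{i | w i < 0} := by
  obtain ⟨x, hx, x', hx', hxx'⟩ := one_lt_card.mp hP
  obtain ⟨y, hy, y', hy', hyy'⟩ := one_lt_card.mp hQ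
  simp only [mem_filter, mem_univ, true_and] at hx hx' hy hy'
  have hconstP : ∀ i, 0 < w i → w i = w x := fun i hi =>
    eq_of_mul_neg_of_mul_neg hc ha hG (mul_neg_of_pos_of_neg hi hy) (mul_neg_of_pos_of_neg hx hy)
  have hconstQ : ∀ j, w j < 0 → w j = w y := fun j hj =>
    eq_of_mul_neg_of_mul_neg hc ha hG (mul_neg_of_neg_of_pos hj hx) (mul_neg_of_neg_of_pos hy hx)
  have hxx : c * (w x * w x) = a := by
    have h := mul_eq_of_not_adj hG hxx' (by rw [hadj]; nlinarith)
    rwa [hconstP x' hx'] at h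
  have hyy : c * (w y * w y) = a := by
    have h := mul_eq_of_not_adj hG hyy' (by rw [hadj]; nlinarith)
    rwa [hconstQ y' hy'] at h
  have hxy : w x = -w y := by
    rcases mul_self_eq_mul_self_iff.mp (mul_left_cancel₀ hc.ne' (hxx.trans hyy.symm)) with h | h
    · linarith
    · exact h
  have hnotP : ∀ i, ¬0 < w i ↔ w i < 0 := fun i => by rw [not_lt, (hne i).le_iff_lt]
  have hsplit : ∑ i, w i = #{i | 0 < w i} * w x + #{i | w i < 0} * w y := by
    rw [← sum_filter_add_sum_filter_not univ (fun i => 0 < w i),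
      filter_congr (fun i _ => hnotP i), sum_congr rfl fun i hi => hconstP i (mem_filter.mp hi).2,
      sum_congr rfl fun i hi => hconstQ i (mem_filter.mp hi).2, sum_const, sum_const,
      nsmul_eq_mul, nsmul_eq_mul]
  rw [hsplit, hxy] at hsum
  exact_mod_cast (by nlinarith : (#{i | 0 < w i} : ℝ) = #{i | w i < 0})

theorem exists_isCompleteBipartiteOn_of_adj_iff (hc : 0 < c) (ha : 0 < a)
    (hG : ∀ i j, i ≠ j → c * (w i * w j) = a - if G.Adj i j then 1 else 0)
    (hsum : ∑ i, w i = 0) (hne : ∀ i, w i ≠ 0) (hadj : ∀ i j, G.Adj i j ↔ w i * w j < 0)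
    {i₀ j₀ : V} (hi₀ : 0 < w i₀) (hj₀ : w j₀ < 0) :
    ∃ s : Finset V, G.IsCompleteBipartiteOn s ∧ (#s = 1 ∨ 2 * #s = Fintype.card V) := by
  have hnotP : ∀ i, ¬0 < w i ↔ w i < 0 := fun i => by rw [not_lt, (hne i).le_iff_lt]
  set P : Finset V := {i | 0 < w i}
  set Q : Finset V := {i | w i < 0}
  have hmemP : ∀ i, i ∈ P ↔ 0 < w i := by simp [P]
  have hmemQ : ∀ i, i ∈ Q ↔ ¬0 < w i := by simp [Q, hnotP]
  have hadjP : G.IsCompleteBipartiteOn P := by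
    intro u v
    simp only [hadj, mul_neg_iff, hmemP, ← hnotP]
    tauto
  have hadjQ : G.IsCompleteBipartiteOn Q := by
    intro u v
    simp only [hadj, mul_neg_iff, hmemQ, ← hnotP]
    tauto
  have hPQ : #P + #Q = Fintype.card V := by
    rw [← card_univ, ← card_filter_add_card_filter_not (s := univ) (fun i => 0 < w i),
      filter_congr fun i _ => hnotP i]
  by_cases hP1 : #P = 1
  · exact ⟨P, hadjP, Or.inl hP1⟩
  by_cases hQ1 : #Q = 1
  · exact ⟨Q, hadjQ, Or.inl hQ1⟩
  have hP0 : 0 < #P := card_pos.mpr ⟨i₀, (hmemP i₀).mpr hi₀⟩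
  have hQ0 : 0 < #Q := card_pos.mpr ⟨j₀, (hmemQ j₀).mpr hj₀.not_gt⟩
  have : #P = #Q := card_eq_card_of_one_lt_card hc ha hG hsum hne hadj
    (show 1 < #P by omega) (show 1 < #Q by omega)
  exact ⟨P, hadjP, Or.inr (by omega)⟩

theorem exists_isCompleteBipartiteOn (hc : 0 < c) (ha : 0 < a)
    (hG : ∀ i j, i ≠ j → c * (w i * w j) = a - if G.Adj i j then 1 else 0)
    (hsum : ∑ i, w i = 0) (hw : w ≠ 0) :
    ∃ s : Finset V, G.IsCompleteBipartiteOn s ∧ (#s = 1 ∨ 2 * #s = Fintype.card V) := by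
  obtain ⟨k, hk⟩ := Function.ne_iff.mp hw
  obtain ⟨i₀, -, hi₀⟩ := exists_pos_of_sum_zero_of_exists_nonzero w hsum ⟨k, mem_univ k, hk⟩
  obtain ⟨j₀, -, hj₀⟩ := exists_pos_of_sum_zero_of_exists_nonzero (-w)
    (by simp [sum_neg_distrib, hsum]) ⟨k, mem_univ k, neg_ne_zero.mpr hk⟩
  rw [Pi.neg_apply, neg_pos] at hj₀
  have ha1 : a < 1 := by
    have hneg := mul_neg_of_pos_of_neg hc (mul_neg_of_pos_of_neg hi₀ hj₀)
    rw [mul_eq_sub_one_of_adj hG (adj_of_mul_neg hc ha hG (mul_neg_of_pos_of_neg hi₀ hj₀))] at hneg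
    linarith
  have hadj : ∀ i j, G.Adj i j ↔ w i * w j < 0 := fun i j => adj_iff_mul_neg hc ha ha1 hG
  have hne : ∀ i, w i ≠ 0 := by
    intro i hi
    have hii₀ : i ≠ i₀ := by rintro rfl; exact hi₀.ne' hi
    have := mul_eq_of_not_adj hG hii₀ (by rw [hadj, hi, zero_mul]; exact lt_irrefl 0)
    rw [hi, zero_mul, mul_zero] at this
    exact ha.ne this
  exact exists_isCompleteBipartiteOn_of_adj_iff hc ha hG hsum hne hadj hi₀ hj₀

end SimpleGraph

namespace SimpleGraph

variable {V : Type*} [Fintype V] [DecidableEq V] (G : SimpleGraph V) [DecidableRel G.Adj]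

theorem lapMatrix_mulVec_one : G.lapMatrix ℝ *ᵥ (fun _ => 1) = (0 : ℝ) • fun _ => 1 := by
  rw [G.lapMatrix_mulVec_const_eq_zero, zero_smul]

theorem sum_eq_zero_of_lapMatrix_mulVec_eq_smul {β : ℝ} {w : V → ℝ}
    (hw : G.lapMatrix ℝ *ᵥ w = β • w) (hβ : β ≠ 0) : ∑ i, w i = 0 := by
  simpa [dotProduct] using (G.isSymm_lapMatrix (R := ℝ)).dotProduct_eq_zero_of_mulVec_eq_smul
    G.lapMatrix_mulVec_one hw hβ.symm

theorem mul_eq_sub_ite_of_finrank_eigenspace_lapMatrix {α β : ℝ} {w : V → ℝ}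
    (hw : G.lapMatrix ℝ *ᵥ w = β • w) (hw0 : w ≠ 0) (hα : α ≠ 0) (hβ : β ≠ 0) (hαβ : α ≠ β)
    (hmult : finrank ℝ (End.eigenspace (toLin' (G.lapMatrix ℝ)) α) + 2 = Fintype.card V)
    {i j : V} (hij : i ≠ j) :
    (β - α) / (w ⬝ᵥ w) * (w i * w j) = α / Fintype.card V - if G.Adj i j then 1 else 0 := by
  have hL := congrFun₂ ((G.isSymm_lapMatrix (R := ℝ)).eq_add_vecMulVec_of_finrank_eigenspace
    G.lapMatrix_mulVec_one hw (Function.ne_iff.mpr ⟨i, one_ne_zero⟩) hw0 hα.symm hαβ.symm hβ.symm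
    hmult) i j
  generalize (β - α) / (w ⬝ᵥ w) = c at hL ⊢
  simp only [lapMatrix, degMatrix, Matrix.sub_apply, ne_eq, hij, not_false_eq_true,
    diagonal_apply_ne, adjMatrix_apply, zero_sub, dotProduct, mul_one, sum_const, card_univ,
    nsmul_eq_mul, neg_div, neg_smul, Matrix.add_apply, Matrix.smul_apply, one_apply_ne,
    smul_eq_mul, mul_zero, Matrix.neg_apply, vecMulVec_apply, zero_add] at hL
  linarith

end SimpleGraph

theorem isCompleteBipartiteOn_starGraph (n : ℕ) :
    (starGraph n).IsCompleteBipartiteOn {i | (i : ℕ) < 1} := by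
  intro u v
  simp only [starGraph, SimpleGraph.fromRel_adj, mem_filter, mem_univ, true_and, Nat.lt_one_iff,
    ne_eq, Fin.ext_iff]
  omega

theorem isCompleteBipartiteOn_multipartiteOn (n m : ℕ) :
    (multipartiteOn n (fun v => if v.val < m then 0 else 1)).IsCompleteBipartiteOn
      {i | (i : ℕ) < m} := by
  intro u v
  simp only [multipartiteOn, SimpleGraph.fromRel_adj, mem_filter, mem_univ, true_and, ne_eq,
    Fin.ext_iff]
  split_ifs <;> simp <;> omega

theorem stmt_17_general (n : ℕ) (hn : 3 ≤ n) (G : SimpleGraph (Fin n)) [DecidableRel G.Adj]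
    (α β : ℝ) (hα : 0 < α) (hαβ : α < β)
    (hβ : IsEigenvalue (G.lapMatrix ℝ) β)
    (hmult : eigMult (G.lapMatrix ℝ) α = n - 2) :
    (2 ∣ n ∧ Nonempty (G ≃g multipartiteOn n (fun v => if v.val < n / 2 then 0 else 1))) ∨
      Nonempty (G ≃g starGraph n) := by
  obtain ⟨w, hwβ, hw0⟩ := hβ.exists_hasEigenvector
  rw [mem_eigenspace_toLin'_iff] at hwβ
  have hβ0 : β ≠ 0 := (hα.trans hαβ).ne'
  have hc : 0 < (β - α) / (w ⬝ᵥ w) := div_pos (sub_pos.2 hαβ) <|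
    (sum_nonneg fun i _ => mul_self_nonneg _).lt_of_ne
      (Ne.symm (dotProduct_self_eq_zero.not.mpr hw0))
  obtain ⟨s, hs, hcard⟩ := G.exists_isCompleteBipartiteOn (a := α / n) hc (by positivity)
    (fun i j hij => by
      simpa using G.mul_eq_sub_ite_of_finrank_eigenspace_lapMatrix hwβ hw0 hα.ne' hβ0 hαβ.ne
        (by rw [Fintype.card_fin]; unfold eigMult at hmult; omega) hij)
    (G.sum_eq_zero_of_lapMatrix_mulVec_eq_smul hwβ hβ0) hw0
  rw [Fintype.card_fin] at hcard
  rcases hcard with hcard | hcard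
  · refine Or.inr ((hs.nonempty_iso (isCompleteBipartiteOn_starGraph n)) ?_)
    rw [hcard, Fin.card_filter_val_lt]
    omega
  · refine Or.inl ⟨⟨#s, by omega⟩, hs.nonempty_iso (isCompleteBipartiteOn_multipartiteOn n _) ?_⟩
    rw [Fin.card_filter_val_lt]
    omega

/-- If `G` is a graph on `n ≥ 3` vertices whose distinct Laplacian eigenvalues are exactly
`0 < α < β`, with `α` of multiplicity `n - 2`, then `G` is the complete bipartite graph
`K_{n/2,n/2}` (so `n` is even) or the star `S_n`. -/
theorem stmt_17 (n : ℕ) (hn : 3 ≤ n) (G : SimpleGraph (Fin n)) [DecidableRel G.Adj]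
    (α β : ℝ) (hα : 0 < α) (hαβ : α < β)
    (h0 : IsEigenvalue (G.lapMatrix ℝ) 0)
    (hβ : IsEigenvalue (G.lapMatrix ℝ) β)
    (hmult : eigMult (G.lapMatrix ℝ) α = n - 2)
    (hall : ∀ μ : ℝ, IsEigenvalue (G.lapMatrix ℝ) μ → μ = 0 ∨ μ = α ∨ μ = β) :
    (2 ∣ n ∧ Nonempty (G ≃g multipartiteOn n (fun v => if v.val < n / 2 then 0 else 1))) ∨
      Nonempty (G ≃g starGraph n) :=
  stmt_17_general n hn G α β hα hαβ hβ hmult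
end
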